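/- arXiv:1602.08907 — 2 statements merged into one kernel-verified Lean document; each statement's English description precedes it below -/
import Mathlib

section
/- Let G be a connected simple graph of order n ≥ 9. If 2·τ(G) ≤ n, then β_p(G) ≤ n−3. -/
open Classical SimpleGraph

noncomputable section

/-- The distance from a vertex to a set of vertices. -/
def setDist {V : Type*} (G : SimpleGraph V) (u : V) (S : Set V) : ℕ :=
  sInf ((G.dist u) '' S)

/-- A locating partition of a graph: a partition of the vertex set such that every
vertex is uniquely determined by its vector of distances to the parts. -/
def IsLocatingPartition {V : Type*} (G : SimpleGraph V) (P : Set (Set V)) : Prop :=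
  Setoid.IsPartition P ∧
    ∀ u v : V, (∀ S ∈ P, setDist G u S = setDist G v S) → u = v

/-- The partition dimension: the minimum cardinality of a locating partition. -/
def partitionDim {V : Type*} (G : SimpleGraph V) : ℕ :=
  sInf {k | ∃ P : Set (Set V), IsLocatingPartition G P ∧ P.ncard = k}

/-- Two vertices are twins if they have the same neighbors other than themselves. -/
def IsTwin {V : Type*} (G : SimpleGraph V) (u v : V) : Prop :=
  G.neighborSet u \ {v} = G.neighborSet v \ {u}

/-- The twin class of a vertex. -/
def twinClass {V : Type*} (G : SimpleGraph V) (u : V) : Set V :=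
  {v | IsTwin G u v}

/-- The twin number: the maximum cardinality of a twin class. -/
def twinNumber {V : Type*} (G : SimpleGraph V) : ℕ :=
  sSup {k | ∃ u : V, (twinClass G u).ncard = k}

set_option linter.unusedSectionVars false

section Infra

variable {V : Type*} [Fintype V] {G : SimpleGraph V}

lemma setDist_singleton (G : SimpleGraph V) (u w : V) : setDist G u {w} = G.dist u w := by
  simp [setDist]

lemma setDist_zero_of_mem {u : V} {S : Set V} (h : u ∈ S) : setDist G u S = 0 :=
  Nat.eq_zero_of_le_zero (Nat.sInf_le ⟨u, h, by simp⟩)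

lemma mem_of_setDist_zero (hG : G.Connected) {u : V} {S : Set V} (hS : S.Nonempty)
    (h : setDist G u S = 0) : u ∈ S := by
  rcases Nat.sInf_eq_zero.mp h with h0 | hemp
  · rcases h0 with ⟨x, hx, hd⟩
    rwa [(hG.dist_eq_zero_iff).mp hd]
  · exact absurd hemp (by simpa [Set.image_eq_empty] using hS.ne_empty)

/-- The key reduction: three disjoint pairs, each separated by a vertex outside all
pairs, give a locating partition with `n - 3` classes. -/
theorem partitionDim_le_of_pairs (hG : G.Connected) {n : ℕ} (hn : Fintype.card V = n)
    (h9 : 9 ≤ n) (u v w : Fin 3 → V)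
    (hu : Function.Injective u) (hv : Function.Injective v)
    (huv : ∀ i j, u i ≠ v j)
    (hwu : ∀ i j, w i ≠ u j) (hwv : ∀ i j, w i ≠ v j)
    (hsplit : ∀ i, G.dist (u i) (w i) ≠ G.dist (v i) (w i)) :
    partitionDim G ≤ n - 3 := by
  classical
  set pairSet : Fin 3 → Set V := fun i => {u i, v i} with hpairSet
  set six : Set V := Set.range u ∪ Set.range v with hsix
  set P : Set (Set V) := Set.range pairSet ∪ (fun x => ({x} : Set V)) '' sixᶜ with hP
  -- basic facts
  have hmem_pair : ∀ (x : V) (i : Fin 3), x ∈ pairSet i ↔ x = u i ∨ x = v i := by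
    intro x i; simp [hpairSet]
  have hw_not_six : ∀ i, w i ∈ sixᶜ := by
    intro i hmem
    rcases hmem with ⟨j, hj⟩ | ⟨j, hj⟩
    · exact hwu i j hj.symm
    · exact hwv i j hj.symm
  have hsix_iff : ∀ x : V, x ∈ six ↔ (∃ i, x = u i) ∨ (∃ i, x = v i) := by
    intro x
    simp [hsix, eq_comm]
  have hpair_unique : ∀ (a : V) (i j : Fin 3), a ∈ pairSet i → a ∈ pairSet j → i = j := by
    intro a i j hi hj
    rw [hmem_pair] at hi hj
    rcases hi with h1 | h1 <;> rcases hj with h2 | h2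
    · exact hu (h1 ▸ h2 ▸ rfl)
    · exact absurd (h1 ▸ h2 ▸ rfl : u i = v j) (huv i j)
    · exact absurd (h2 ▸ h1 ▸ rfl : u j = v i) (huv j i)
    · exact hv (h1 ▸ h2 ▸ rfl)
  have hpart : Setoid.IsPartition P := by
    constructor
    · intro hemp
      rcases hemp with ⟨i, hi⟩ | ⟨x, _, hx⟩
      · have : u i ∈ pairSet i := by simp [hpairSet]
        rw [hi] at this
        exact this
      · simp at hx
    · intro a
      by_cases ha : a ∈ six
      · rw [hsix_iff] at ha
        have : ∃ i, a ∈ pairSet i := by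
          rcases ha with ⟨i, hi⟩ | ⟨i, hi⟩ <;> exact ⟨i, by simp [hpairSet, hi]⟩
        rcases this with ⟨i, hi⟩
        refine ⟨pairSet i, ⟨Or.inl ⟨i, rfl⟩, hi⟩, ?_⟩
        rintro S ⟨hS | hS, haS⟩
        · rcases hS with ⟨j, rfl⟩
          rw [hpair_unique a j i haS hi]
        · rcases hS with ⟨x, hx, rfl⟩
          rw [Set.mem_singleton_iff] at haS
          subst haS
          exfalso
          apply hx
          rw [hsix_iff]
          rw [hmem_pair] at hi
          rcases hi with h | h
          · exact Or.inl ⟨i, h⟩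
          · exact Or.inr ⟨i, h⟩
      · refine ⟨{a}, ⟨Or.inr ⟨a, ha, rfl⟩, rfl⟩, ?_⟩
        rintro S ⟨hS | hS, haS⟩
        · rcases hS with ⟨j, rfl⟩
          exfalso
          rw [hmem_pair] at haS
          apply ha
          rw [hsix_iff]
          rcases haS with h | h
          · exact Or.inl ⟨j, h⟩
          · exact Or.inr ⟨j, h⟩
        · rcases hS with ⟨x, _, rfl⟩
          simp only [Set.mem_singleton_iff] at haS
          rw [haS]
  have hloc : ∀ a b : V, (∀ S ∈ P, setDist G a S = setDist G b S) → a = b := by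
    intro a b heq
    obtain ⟨S, ⟨hSP, haS⟩, _⟩ := hpart.2 a
    have hbS : b ∈ S := by
      have hSne : S.Nonempty := ⟨a, haS⟩
      have h0 : setDist G b S = 0 := by
        rw [← heq S hSP]
        exact setDist_zero_of_mem haS
      exact mem_of_setDist_zero hG hSne h0
    rcases hSP with ⟨i, rfl⟩ | ⟨x, _, rfl⟩
    · -- both in the pair {u i, v i}
      by_contra hab
      have key : G.dist (u i) (w i) = G.dist (v i) (w i) := by
        have hs := heq {w i} (Or.inr ⟨w i, hw_not_six i, rfl⟩)
        rw [setDist_singleton, setDist_singleton] at hs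
        rw [hmem_pair] at haS hbS
        rcases haS with rfl | rfl <;> rcases hbS with rfl | rfl
        · exact absurd rfl hab
        · exact hs
        · exact hs.symm
        · exact absurd rfl hab
      exact hsplit i key
    · simp only [Set.mem_singleton_iff] at haS hbS
      rw [haS, hbS]
  have hncard : P.ncard = n - 3 := by
    have hpinj : Function.Injective pairSet := by
      intro i j hij
      exact hpair_unique (u i) i j (by simp [hpairSet]) (hij ▸ (by simp [hpairSet]))
    have hA : (Set.range pairSet).ncard = 3 := by
      rw [← Set.image_univ, Set.ncard_image_of_injective _ hpinj, Set.ncard_univ]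
      simp
    have hsinginj : Function.Injective (fun x : V => ({x} : Set V)) := fun a b h => by
      simpa using h
    have h6 : six.ncard = 6 := by
      have hdisj : Disjoint (Set.range u) (Set.range v) := by
        rw [Set.disjoint_left]
        rintro x ⟨i, rfl⟩ ⟨j, hj⟩
        exact huv i j (hj.symm)
      rw [hsix, Set.ncard_union_eq hdisj (Set.toFinite _) (Set.toFinite _)]
      rw [← Set.image_univ, Set.ncard_image_of_injective _ hu]
      rw [← Set.image_univ, Set.ncard_image_of_injective _ hv]
      rw [Set.ncard_univ]
      simp
    have hcompl : (sixᶜ).ncard = n - 6 := by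
      have hh := Set.ncard_add_ncard_compl six
      rw [h6, Nat.card_eq_fintype_card, hn] at hh
      omega
    have hB : ((fun x => ({x} : Set V)) '' sixᶜ).ncard = n - 6 := by
      rw [Set.ncard_image_of_injective _ hsinginj, hcompl]
    have hdisjAB : Disjoint (Set.range pairSet) ((fun x => ({x} : Set V)) '' sixᶜ) := by
      rw [Set.disjoint_left]
      rintro S ⟨i, rfl⟩ ⟨x, _, heq⟩
      have h1 : u i ∈ pairSet i := by simp [hpairSet]
      have h2 : v i ∈ pairSet i := by simp [hpairSet]
      rw [← heq] at h1 h2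
      simp only [Set.mem_singleton_iff] at h1 h2
      exact huv i i (h1.symm ▸ h2.symm ▸ rfl)
    rw [hP, Set.ncard_union_eq hdisjAB (Set.toFinite _) (Set.toFinite _), hA, hB]
    omega
  have : n - 3 ∈ {k | ∃ P : Set (Set V), IsLocatingPartition G P ∧ P.ncard = k} :=
    ⟨P, ⟨hpart, hloc⟩, hncard⟩
  exact Nat.sInf_le this

end Infra

section Exists

variable {V : Type*} [Fintype V] {G : SimpleGraph V}

lemma exists_three {S : Finset V} (h : 3 ≤ S.card) :
    ∃ a b c, a ∈ S ∧ b ∈ S ∧ c ∈ S ∧ a ≠ b ∧ a ≠ c ∧ b ≠ c := by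
  obtain ⟨a, ha⟩ := Finset.card_pos.mp (by omega : 0 < S.card)
  have h2 : 2 ≤ (S.erase a).card := by
    rw [Finset.card_erase_of_mem ha]; omega
  obtain ⟨b, hb⟩ := Finset.card_pos.mp (by omega : 0 < (S.erase a).card)
  have h1 : 1 ≤ ((S.erase a).erase b).card := by
    rw [Finset.card_erase_of_mem hb]; omega
  obtain ⟨c, hc⟩ := Finset.card_pos.mp (by omega : 0 < ((S.erase a).erase b).card)
  refine ⟨a, b, c, ha, Finset.mem_of_mem_erase hb,
    Finset.mem_of_mem_erase (Finset.mem_of_mem_erase hc), ?_, ?_, ?_⟩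
  · exact fun hab => (Finset.ne_of_mem_erase hb) hab.symm
  · exact fun hac => (Finset.ne_of_mem_erase (Finset.mem_of_mem_erase hc)) hac.symm
  · exact fun hbc => (Finset.ne_of_mem_erase hc) hbc.symm

lemma inj_vec3 {a b c : V} (hab : a ≠ b) (hac : a ≠ c) (hbc : b ≠ c) :
    Function.Injective ![a, b, c] := by
  intro i j hij
  fin_cases i <;> fin_cases j <;> simp_all

lemma vec3_app (a b c : V) : ![a,b,c] 0 = a ∧ ![a,b,c] 1 = b ∧ ![a,b,c] 2 = c :=
  ⟨rfl, rfl, rfl⟩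

lemma forall_vec3 {P : V → Prop} {a b c : V} (ha : P a) (hb : P b) (hc : P c) :
    ∀ i, P (![a,b,c] i) := by
  intro i; fin_cases i <;> assumption

/-- Non-twins admit a distance witness. -/
lemma exists_witness_of_not_twin (hG : G.Connected) {a b : V} (hab : a ≠ b)
    (h : ¬ IsTwin G a b) : ∃ t : V, t ≠ a ∧ t ≠ b ∧ G.dist t a ≠ G.dist t b := by
  rw [IsTwin, Set.ext_iff] at h
  push_neg at h
  obtain ⟨x, hx⟩ := h
  rcases hx with ⟨h1, h2⟩ | ⟨h1, h2⟩
  · rcases h1 with ⟨hadj, hxb⟩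
    simp only [Set.mem_singleton_iff] at hxb
    have hxa : x ≠ a := (G.ne_of_adj hadj).symm
    have hnadj : ¬ G.Adj b x := by
      intro hadj2
      exact h2 ⟨hadj2, by simpa using hxa⟩
    refine ⟨x, hxa, hxb, ?_⟩
    have hd1 : G.dist x a = 1 := dist_eq_one_iff_adj.mpr hadj.symm
    intro hdd
    rw [hd1] at hdd
    exact hnadj (dist_eq_one_iff_adj.mp hdd.symm).symm
  · rcases h2 with ⟨hadj, hxa⟩
    simp only [Set.mem_singleton_iff] at hxa
    have hxb : x ≠ b := (G.ne_of_adj hadj).symm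
    have hnadj : ¬ G.Adj a x := by
      intro hadj2
      exact h1 ⟨hadj2, by simpa using hxb⟩
    refine ⟨x, hxa, hxb, ?_⟩
    have hd1 : G.dist x b = 1 := dist_eq_one_iff_adj.mpr hadj.symm
    intro hdd
    rw [hd1] at hdd
    exact hnadj (dist_eq_one_iff_adj.mp hdd).symm

lemma ncard_twinClass_le_twinNumber (G : SimpleGraph V) (u : V) :
    (twinClass G u).ncard ≤ twinNumber G := by
  apply le_csSup
  · refine ⟨Fintype.card V, ?_⟩
    rintro k ⟨x, rfl⟩
    calc (twinClass G x).ncard ≤ (Set.univ : Set V).ncard :=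
          Set.ncard_le_ncard (Set.subset_univ _) (Set.toFinite _)
      _ = Fintype.card V := by rw [Set.ncard_univ, Nat.card_eq_fintype_card]
  · exact ⟨u, rfl⟩


/-- If some `S` has at least 3 elements, and every fiber of `f` on `S` has at most 2,
there are two elements with different `f`-values. -/
lemma two_diff {S : Finset V} {f : V → ℕ}
    (hfib : ∀ c, (S.filter (fun x => f x = c)).card ≤ 2) (h3 : 3 ≤ S.card) :
    ∃ a ∈ S, ∃ b ∈ S, a ≠ b ∧ f a ≠ f b := by
  obtain ⟨a, ha⟩ := Finset.card_pos.mp (by omega : 0 < S.card)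
  have hsub : ¬ (S ⊆ S.filter (fun x => f x = f a)) := by
    intro hsub
    have := Finset.card_le_card hsub
    have := hfib (f a)
    omega
  obtain ⟨b, hbS, hbf⟩ := Finset.not_subset.mp hsub
  rw [Finset.mem_filter] at hbf
  push_neg at hbf
  have hfb : f b ≠ f a := hbf hbS
  exact ⟨a, ha, b, hbS, fun h => hfb (h ▸ rfl), fun h => hfb h.symm⟩

/-- The fiber dichotomy at a vertex `w0`: either three disjoint pairs separated by `w0`
exist, or all but at most two vertices lie in one fiber of `f = dist w0 ·`. -/
lemma fiber_lemma {n : ℕ} (hn : Fintype.card V = n) (h9 : 9 ≤ n) (w0 : V) (f : V → ℕ)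
    (hno : ¬ ∃ a b : Fin 3 → V, Function.Injective a ∧ Function.Injective b ∧
      (∀ i j, a i ≠ b j) ∧ (∀ i, a i ≠ w0) ∧ (∀ i, b i ≠ w0) ∧ ∀ i, f (a i) ≠ f (b i)) :
    ∃ c, ((Finset.univ.erase w0).filter (fun x => f x ≠ c)).card ≤ 2 := by
  classical
  set T := Finset.univ.erase w0 with hT
  have hTcard : T.card = n - 1 := by
    rw [hT, Finset.card_erase_of_mem (Finset.mem_univ _), Finset.card_univ, hn]
  by_contra hcon
  push_neg at hcon
  apply hno
  by_cases hbig : ∃ c, 3 ≤ (T.filter (fun x => f x = c)).card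
  · obtain ⟨c, hcard⟩ := hbig
    obtain ⟨a1,a2,a3, ha1,ha2,ha3, h12,h13,h23⟩ := exists_three hcard
    have hcc := hcon c
    obtain ⟨b1,b2,b3, hb1,hb2,hb3, g12,g13,g23⟩ :=
      exists_three (show 3 ≤ (T.filter (fun x => f x ≠ c)).card by omega)
    have hamem : ∀ i, ![a1,a2,a3] i ∈ T.filter (fun x => f x = c) :=
      forall_vec3 ha1 ha2 ha3
    have hbmem : ∀ i, ![b1,b2,b3] i ∈ T.filter (fun x => f x ≠ c) :=
      forall_vec3 hb1 hb2 hb3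
    refine ⟨![a1,a2,a3], ![b1,b2,b3], inj_vec3 h12 h13 h23, inj_vec3 g12 g13 g23,
      ?_, ?_, ?_, ?_⟩
    · intro i j hij
      have h1 := (Finset.mem_filter.mp (hamem i)).2
      have h2 := (Finset.mem_filter.mp (hbmem j)).2
      rw [hij] at h1
      exact h2 h1
    · intro i
      exact Finset.ne_of_mem_erase (Finset.mem_filter.mp (hamem i)).1
    · intro i
      exact Finset.ne_of_mem_erase (Finset.mem_filter.mp (hbmem i)).1
    · intro i
      have h1 := (Finset.mem_filter.mp (hamem i)).2
      have h2 := (Finset.mem_filter.mp (hbmem i)).2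
      rw [h1]
      exact fun h => h2 h.symm
  · push_neg at hbig
    have hfib : ∀ c, (T.filter (fun x => f x = c)).card ≤ 2 := by
      intro c; have := hbig c; omega
    obtain ⟨a1, ha1, b1, hb1, e1, d1⟩ := two_diff hfib (by omega)
    set T2 := (T.erase a1).erase b1 with hT2
    have hT2sub : T2 ⊆ T := fun x hx =>
      Finset.mem_of_mem_erase (Finset.mem_of_mem_erase hx)
    have hT2card : n - 3 ≤ T2.card := by
      rw [hT2, Finset.card_erase_of_mem (Finset.mem_erase_of_ne_of_mem e1.symm hb1),
        Finset.card_erase_of_mem ha1]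
      omega
    have hfib2 : ∀ c, (T2.filter (fun x => f x = c)).card ≤ 2 := fun c =>
      le_trans (Finset.card_le_card (Finset.filter_subset_filter _ hT2sub)) (hfib c)
    obtain ⟨a2, ha2, b2, hb2, e2, d2⟩ := two_diff hfib2 (by omega)
    set T3 := (T2.erase a2).erase b2 with hT3
    have hT3sub : T3 ⊆ T2 := fun x hx =>
      Finset.mem_of_mem_erase (Finset.mem_of_mem_erase hx)
    have hT3card : n - 5 ≤ T3.card := by
      rw [hT3, Finset.card_erase_of_mem (Finset.mem_erase_of_ne_of_mem e2.symm hb2),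
        Finset.card_erase_of_mem ha2]
      omega
    have hfib3 : ∀ c, (T3.filter (fun x => f x = c)).card ≤ 2 := fun c =>
      le_trans (Finset.card_le_card (Finset.filter_subset_filter _ hT3sub)) (hfib2 c)
    obtain ⟨a3, ha3, b3, hb3, e3, d3⟩ := two_diff hfib3 (by omega)
    -- distinctness bookkeeping
    have hne2 : ∀ x ∈ T2, x ≠ a1 ∧ x ≠ b1 := by
      intro x hx
      exact ⟨Finset.ne_of_mem_erase (Finset.mem_of_mem_erase hx), Finset.ne_of_mem_erase hx⟩
    have hne3 : ∀ x ∈ T3, x ≠ a2 ∧ x ≠ b2 := by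
      intro x hx
      exact ⟨Finset.ne_of_mem_erase (Finset.mem_of_mem_erase hx), Finset.ne_of_mem_erase hx⟩
    have ha2T : a2 ∈ T := hT2sub ha2
    have hb2T : b2 ∈ T := hT2sub hb2
    have ha3T : a3 ∈ T := hT2sub (hT3sub ha3)
    have hb3T : b3 ∈ T := hT2sub (hT3sub hb3)
    have ha2' := hne2 a2 ha2
    have hb2' := hne2 b2 hb2
    have ha3' := hne2 a3 (hT3sub ha3)
    have hb3' := hne2 b3 (hT3sub hb3)
    have ha3'' := hne3 a3 ha3
    have hb3'' := hne3 b3 hb3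
    refine ⟨![a1,a2,a3], ![b1,b2,b3],
      inj_vec3 ha2'.1.symm ha3'.1.symm ha3''.1.symm,
      inj_vec3 hb2'.2.symm hb3'.2.symm hb3''.2.symm, ?_, ?_, ?_, ?_⟩
    · intro i j
      fin_cases i <;> fin_cases j <;>
        simp only [Matrix.cons_val_zero, Matrix.cons_val_one, Matrix.head_cons,
          Matrix.cons_val_two, Matrix.tail_cons] <;>
        first
          | exact e1 | exact e2 | exact e3
          | exact hb2'.1.symm | exact hb3'.1.symm | exact hb3''.1.symm
          | exact ha2'.2 | exact ha3'.2 | exact ha3''.2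
    · intro i
      refine forall_vec3 (P := fun x => x ≠ w0) ?_ ?_ ?_ i <;>
        exact Finset.ne_of_mem_erase (by assumption)
    · intro i
      refine forall_vec3 (P := fun x => x ≠ w0) ?_ ?_ ?_ i <;>
        exact Finset.ne_of_mem_erase (by assumption)
    · intro i
      fin_cases i
      · exact d1
      · exact d2
      · exact d3
    

/-- Completing a selection (three targets with witnesses) to a full configuration of
three separated pairs, in the "swamp" situation. -/
lemma zassign {n : ℕ} (hG : G.Connected) (hn : Fintype.card V = n) (h9 : 9 ≤ n)
    (c : V → ℕ) (X : V → Finset V)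
    (hXdef : ∀ t x, x ∈ X t ↔ (x ≠ t ∧ G.dist t x ≠ c t))
    (hXcard : ∀ t, (X t).card ≤ 2)
    (w y : Fin 3 → V) (hyinj : Function.Injective y)
    (hyX : ∀ i, y i ∈ X (w i)) (hwy : ∀ i j, w i ≠ y j) :
    ∃ u v w' : Fin 3 → V, Function.Injective u ∧ Function.Injective v ∧
      (∀ i j, u i ≠ v j) ∧ (∀ i j, w' i ≠ u j) ∧ (∀ i j, w' i ≠ v j) ∧
      ∀ i, G.dist (u i) (w' i) ≠ G.dist (v i) (w' i) := by
  classical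
  set pool : (Fin 3 → V) → Finset V :=
    fun yy => Finset.univ.filter (fun x => (∀ i, x ≠ yy i) ∧ (∀ i, x ≠ w i)) with hpool
  have hpoolcard : ∀ yy : Fin 3 → V, n - 6 ≤ (pool yy).card := by
    intro yy
    have hsplitcard := Finset.card_filter_add_card_filter_not
      (s := (Finset.univ : Finset V)) (p := fun x => (∀ i, x ≠ yy i) ∧ (∀ i, x ≠ w i))
    have hsub : Finset.univ.filter
        (fun x => ¬ ((∀ i, x ≠ yy i) ∧ (∀ i, x ≠ w i))) ⊆
        {yy 0, yy 1, yy 2, w 0, w 1, w 2} := by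
      intro x hx
      rw [Finset.mem_filter] at hx
      have hx2 := hx.2
      push_neg at hx2
      simp only [Finset.mem_insert, Finset.mem_singleton]
      by_cases h0 : ∀ i, x ≠ yy i
      · obtain ⟨i, hi⟩ := hx2 h0
        fin_cases i
        · exact Or.inr (Or.inr (Or.inr (Or.inl hi)))
        · exact Or.inr (Or.inr (Or.inr (Or.inr (Or.inl hi))))
        · exact Or.inr (Or.inr (Or.inr (Or.inr (Or.inr hi))))
      · push_neg at h0
        obtain ⟨i, hi⟩ := h0
        fin_cases i
        · exact Or.inl hi
        · exact Or.inr (Or.inl hi)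
        · exact Or.inr (Or.inr (Or.inl hi))
    have hle : (Finset.univ.filter
        (fun x => ¬ ((∀ i, x ≠ yy i) ∧ (∀ i, x ≠ w i)))).card ≤ 6 := by
      refine le_trans (Finset.card_le_card hsub) ?_
      refine le_trans (Finset.card_insert_le _ _) ?_
      refine Nat.succ_le_succ (le_trans (Finset.card_insert_le _ _) ?_)
      refine Nat.succ_le_succ (le_trans (Finset.card_insert_le _ _) ?_)
      refine Nat.succ_le_succ (le_trans (Finset.card_insert_le _ _) ?_)
      refine Nat.succ_le_succ (le_trans (Finset.card_insert_le _ _) ?_)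
      simp
    rw [Finset.card_univ, hn] at hsplitcard
    simp only [hpool]
    omega
  -- the core construction, assuming no common exceptional vertex in the pool
  have core : ∀ yy : Fin 3 → V, Function.Injective yy → (∀ i, yy i ∈ X (w i)) →
      (∀ i j, w i ≠ yy j) → (¬ ∃ v ∈ pool yy, ∀ i, v ∈ X (w i)) →
      ∃ u v w' : Fin 3 → V, Function.Injective u ∧ Function.Injective v ∧
      (∀ i j, u i ≠ v j) ∧ (∀ i j, w' i ≠ u j) ∧ (∀ i j, w' i ≠ v j) ∧
      ∀ i, G.dist (u i) (w' i) ≠ G.dist (v i) (w' i) := by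
    intro yy hinj hX hwyy hnc
    set t : Fin 3 → Finset V := fun i => (pool yy) \ (X (w i)) with ht
    have hhall : ∀ s : Finset (Fin 3), s.card ≤ (s.biUnion t).card := by
      intro s
      rcases Finset.eq_empty_or_nonempty s with rfl | ⟨i, hi⟩
      · simp
      by_cases hs3 : s.card ≤ 2
      · have h1 : (t i) ⊆ s.biUnion t := Finset.subset_biUnion_of_mem t hi
        have h2 : (pool yy).card - 1 ≤ (t i).card := by
          have hcs := Finset.card_sdiff_add_card_eq_card
            (Finset.inter_subset_right : (X (w i)) ∩ (pool yy) ⊆ pool yy)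
          have h3 : ((pool yy) \ ((X (w i)) ∩ (pool yy))).card = (t i).card := by
            rw [ht]
            congr 1
            rw [Finset.sdiff_inter_self_right]
          have h4 : ((X (w i)) ∩ (pool yy)).card ≤ 1 := by
            have hysub : (X (w i)) ∩ (pool yy) ⊆ (X (w i)).erase (yy i) := by
              intro x hx
              rw [Finset.mem_inter] at hx
              refine Finset.mem_erase.mpr ⟨?_, hx.1⟩
              intro hxy
              have := hx.2
              rw [hpool, Finset.mem_filter] at this
              exact this.2.1 i hxy
            refine le_trans (Finset.card_le_card hysub) ?_
            rw [Finset.card_erase_of_mem (hX i)]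
            have := hXcard (w i)
            omega
          omega
        have h5 := hpoolcard yy
        have := Finset.card_le_card h1
        omega
      · -- s.card = 3, so s = univ and the union is the whole pool
        have hcard3 : s.card = 3 := by
          have := Finset.card_le_card (Finset.subset_univ s)
          simp only [Finset.card_univ, Fintype.card_fin] at this
          omega
        have hsuniv : s = Finset.univ := Finset.eq_univ_of_card s (by simp [hcard3])
        have hsub : pool yy ⊆ s.biUnion t := by
          intro v hv
          have : ¬ ∀ i, v ∈ X (w i) := fun hall => hnc ⟨v, hv, hall⟩
          push_neg at this
          obtain ⟨i, hi'⟩ := this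
          exact Finset.mem_biUnion.mpr ⟨i, hsuniv ▸ Finset.mem_univ i,
            Finset.mem_sdiff.mpr ⟨hv, hi'⟩⟩
        have := Finset.card_le_card hsub
        have h5 := hpoolcard yy
        omega
    obtain ⟨z, hzinj, hz⟩ := (Finset.all_card_le_biUnion_card_iff_exists_injective t).mp hhall
    have hzpool : ∀ i, z i ∈ pool yy := fun i => (Finset.mem_sdiff.mp (hz i)).1
    have hzprop : ∀ i, (∀ j, z i ≠ yy j) ∧ (∀ j, z i ≠ w j) := by
      intro i
      have := hzpool i
      rw [hpool, Finset.mem_filter] at this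
      exact this.2
    refine ⟨yy, z, w, hinj, hzinj, ?_, ?_, ?_, ?_⟩
    · exact fun i j => fun h => ((hzprop j).1 i) h.symm
    · exact fun i j => hwyy i j
    · exact fun i j => fun h => ((hzprop j).2 i) h.symm
    · intro i
      have hy' := (hXdef (w i) (yy i)).mp (hX i)
      have hz' : G.dist (w i) (z i) = c (w i) := by
        have hznX : z i ∉ X (w i) := (Finset.mem_sdiff.mp (hz i)).2
        have hzw : z i ≠ w i := (hzprop i).2 i
        by_contra hne
        exact hznX ((hXdef (w i) (z i)).mpr ⟨hzw, hne⟩)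
      rw [SimpleGraph.dist_comm (u := yy i) (v := w i),
        SimpleGraph.dist_comm (u := z i) (v := w i), hz']
      exact fun h => hy'.2 h
  by_cases hv : ∃ v ∈ pool y, ∀ i, v ∈ X (w i)
  · obtain ⟨v, hvpool, hvall⟩ := hv
    have hvprop : (∀ i, v ≠ y i) ∧ (∀ i, v ≠ w i) := by
      have := hvpool
      rw [hpool, Finset.mem_filter] at this
      exact this.2
    set y' : Fin 3 → V := ![y 0, v, y 2] with hy'
    have h02 : y 0 ≠ y 2 := fun h => by have := hyinj h; simp at this
    have hinj' : Function.Injective y' :=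
      inj_vec3 (fun h => hvprop.1 0 h.symm) h02 (hvprop.1 2)
    have hX' : ∀ i, y' i ∈ X (w i) := by
      intro i
      fin_cases i
      · exact hyX 0
      · exact hvall 1
      · exact hyX 2
    have hwy' : ∀ i j, w i ≠ y' j := by
      intro i j
      fin_cases j
      · exact hwy i 0
      · exact fun h => hvprop.2 i h.symm
      · exact hwy i 2
    apply core y' hinj' hX' hwy'
    rintro ⟨v', hv'pool, hv'all⟩
    have hv'prop : (∀ i, v' ≠ y' i) ∧ (∀ i, v' ≠ w i) := by
      have := hv'pool
      rw [hpool, Finset.mem_filter] at this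
      exact this.2
    have hv'v : v' ≠ v := hv'prop.1 1
    have hv'y0 : v' ≠ y 0 := hv'prop.1 0
    have hvy0 : v ≠ y 0 := hvprop.1 0
    have hsub : ({y 0, v, v'} : Finset V) ⊆ X (w 0) := by
      intro x hx
      simp only [Finset.mem_insert, Finset.mem_singleton] at hx
      rcases hx with rfl | rfl | rfl
      · exact hyX 0
      · exact hvall 0
      · exact hv'all 0
    have hcard : ({y 0, v, v'} : Finset V).card = 3 := by
      rw [Finset.card_insert_of_notMem (by simp [hvy0.symm, hv'y0.symm]),
        Finset.card_insert_of_notMem (by simp [hv'v.symm]), Finset.card_singleton]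
    have := Finset.card_le_card hsub
    have := hXcard (w 0)
    omega
  · exact core y hyinj hyX hwy hv


/-- The selection lemma: in the swamp situation, there are three distinct targets
with witnesses avoiding all targets. -/
lemma selection {n : ℕ} (hG : G.Connected) (hn : Fintype.card V = n) (h9 : 9 ≤ n)
    (hτ : 2 * twinNumber G ≤ n)
    (c : V → ℕ) (X : V → Finset V)
    (hXdef : ∀ t x, x ∈ X t ↔ (x ≠ t ∧ G.dist t x ≠ c t))
    (hXcard : ∀ t, (X t).card ≤ 2) :
    ∃ w y : Fin 3 → V, Function.Injective y ∧ (∀ i, y i ∈ X (w i)) ∧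
      (∀ i j, w i ≠ y j) := by
  classical
  set Wit : V → Finset V := fun y0 => Finset.univ.filter (fun t => y0 ∈ X t) with hWit
  have hWitmem : ∀ y0 t, t ∈ Wit y0 ↔ y0 ∈ X t := by
    intro y0 t; rw [hWit]; simp
  set D : Finset V := Finset.univ.filter (fun y0 => (Wit y0).Nonempty) with hD
  have hDmem : ∀ y0, y0 ∈ D ↔ ∃ t, y0 ∈ X t := by
    intro y0
    rw [hD]
    simp only [Finset.mem_filter, Finset.mem_univ, true_and]
    constructor
    · rintro ⟨t, ht⟩; exact ⟨t, (hWitmem y0 t).mp ht⟩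
    · rintro ⟨t, ht⟩; exact ⟨t, (hWitmem y0 t).mpr ht⟩
  -- vertices outside D are pairwise twins
  have htwin : ∀ y z : V, y ∉ D → z ∉ D → ¬ IsTwin G y z → y = z := by
    intro y z hy hz hnt
    by_contra hne
    obtain ⟨t, hty, htz, htd⟩ := exists_witness_of_not_twin hG hne hnt
    by_cases hcy : G.dist t y = c t
    · have hcz : G.dist t z ≠ c t := fun h => htd (hcy.trans h.symm)
      exact hz ((hDmem z).mpr ⟨t, (hXdef t z).mpr ⟨htz.symm, hcz⟩⟩)
    · exact hy ((hDmem y).mpr ⟨t, (hXdef t y).mpr ⟨hty.symm, hcy⟩⟩)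
  have hD5 : 5 ≤ D.card := by
    have hcompl := Finset.card_add_card_compl D
    rw [hn] at hcompl
    rcases Finset.eq_empty_or_nonempty Dᶜ with hemp | ⟨u0, hu0⟩
    · rw [hemp] at hcompl
      simp at hcompl
      omega
    · have hu0' : u0 ∉ D := Finset.mem_compl.mp hu0
      have hsub : (↑(Dᶜ) : Set V) ⊆ twinClass G u0 := by
        intro z hz
        rw [Finset.coe_compl, Set.mem_compl_iff, Finset.mem_coe] at hz
        by_cases hzu : IsTwin G u0 z
        · exact hzu
        · have := htwin u0 z hu0' hz hzu
          rw [← this]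
          exact rfl
      have hle : (Dᶜ).card ≤ twinNumber G := by
        calc (Dᶜ).card = (↑(Dᶜ) : Set V).ncard := (Set.ncard_coe_finset _).symm
          _ ≤ (twinClass G u0).ncard := Set.ncard_le_ncard hsub (Set.toFinite _)
          _ ≤ twinNumber G := ncard_twinClass_le_twinNumber G u0
      omega
  by_cases hfat : ∃ w0 : V, 2 ≤ (X w0).card
  · -- FAT case: some vertex has two exceptional targets
    obtain ⟨w0, hw0⟩ := hfat
    obtain ⟨t1, ht1, t2, ht2, ht12⟩ := Finset.one_lt_card.mp (by omega : 1 < (X w0).card)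
    have ht1p := (hXdef w0 t1).mp ht1
    have ht2p := (hXdef w0 t2).mp ht2
    by_cases hB1 : ∃ w3 y3 : V, y3 ∈ X w3 ∧ y3 ≠ t1 ∧ y3 ≠ t2 ∧ y3 ≠ w0 ∧ w3 ≠ t1 ∧ w3 ≠ t2
    · obtain ⟨w3, y3, hy3, hy31, hy32, hy30, hw31, hw32⟩ := hB1
      refine ⟨![w0, w0, w3], ![t1, t2, y3], inj_vec3 ht12 hy31.symm hy32.symm, ?_, ?_⟩
      · intro i; fin_cases i
        · exact ht1
        · exact ht2
        · exact hy3
      · intro i j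
        fin_cases i <;> fin_cases j
        · exact fun h => ht1p.1 h.symm
        · exact fun h => ht2p.1 h.symm
        · exact fun h => hy30 h.symm
        · exact fun h => ht1p.1 h.symm
        · exact fun h => ht2p.1 h.symm
        · exact fun h => hy30 h.symm
        · exact hw31
        · exact hw32
        · exact fun h => ((hXdef w3 y3).mp hy3).1 h.symm
    · push_neg at hB1
      -- every exceptional incidence involves t1, t2, w0 as target or t1, t2 as witness
      have hB1' : ∀ wx yx : V, yx ∈ X wx → yx ≠ t1 → yx ≠ t2 → yx ≠ w0 →
          wx = t1 ∨ wx = t2 := by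
        intro wx yx h1 h2 h3 h4
        by_cases h5 : wx = t1
        · exact Or.inl h5
        · exact Or.inr (hB1 wx yx h1 h2 h3 h4 h5)
      set S2 : Finset V := (X t1 ∪ X t2) \ {t1, t2, w0} with hS2
      have hS2props : ∀ x ∈ S2, (x ∈ X t1 ∨ x ∈ X t2) ∧ x ≠ t1 ∧ x ≠ t2 ∧ x ≠ w0 := by
        intro x hx
        rw [hS2, Finset.mem_sdiff, Finset.mem_union] at hx
        have := hx.2
        simp only [Finset.mem_insert, Finset.mem_singleton, not_or] at this
        exact ⟨hx.1, this.1, this.2.1, this.2.2⟩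
      have hDsub : D ⊆ S2 ∪ {t1, t2, w0} := by
        intro yx hyx
        obtain ⟨t, hyt⟩ := (hDmem yx).mp hyx
        rw [Finset.mem_union]
        by_cases h1 : yx = t1; · exact Or.inr (by simp [h1])
        by_cases h2 : yx = t2; · exact Or.inr (by simp [h2])
        by_cases h3 : yx = w0; · exact Or.inr (by simp [h3])
        left
        rw [hS2, Finset.mem_sdiff, Finset.mem_union]
        refine ⟨?_, by simp [h1, h2, h3]⟩
        rcases hB1' t yx hyt h1 h2 h3 with rfl | rfl
        · exact Or.inl hyt
        · exact Or.inr hyt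
      have hS2card : 2 ≤ S2.card := by
        have h1 := Finset.card_le_card hDsub
        have h2 := Finset.card_union_le S2 ({t1, t2, w0} : Finset V)
        have h3 : ({t1, t2, w0} : Finset V).card ≤ 3 := by
          refine le_trans (Finset.card_insert_le _ _) ?_
          refine Nat.succ_le_succ (le_trans (Finset.card_insert_le _ _) ?_)
          simp
        omega
      have hwfun : ∀ x ∈ S2, ∃ b, x ∈ X b ∧ (b = t1 ∨ b = t2) := by
        intro x hx
        rcases (hS2props x hx).1 with h | h
        · exact ⟨t1, h, Or.inl rfl⟩
        · exact ⟨t2, h, Or.inr rfl⟩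
      by_cases h3S : 3 ≤ S2.card
      · -- three targets in S2, all witnessed by t1 or t2
        obtain ⟨u1, u2, u3, hu1, hu2, hu3, e12, e13, e23⟩ := exists_three h3S
        obtain ⟨b1, hb1, hb1or⟩ := hwfun u1 hu1
        obtain ⟨b2, hb2, hb2or⟩ := hwfun u2 hu2
        obtain ⟨b3, hb3, hb3or⟩ := hwfun u3 hu3
        have key : ∀ (a b : V), a ∈ S2 → (b = t1 ∨ b = t2) → b ≠ a := by
          intro a b ha hb h
          rcases hb with rfl | rfl
          · exact (hS2props a ha).2.1 h.symm
          · exact (hS2props a ha).2.2.1 h.symm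
        refine ⟨![b1, b2, b3], ![u1, u2, u3], inj_vec3 e12 e13 e23, ?_, ?_⟩
        · intro i; fin_cases i
          · exact hb1
          · exact hb2
          · exact hb3
        · intro i j
          fin_cases i <;> fin_cases j
          · exact key u1 _ hu1 hb1or
          · exact key u2 _ hu2 hb1or
          · exact key u3 _ hu3 hb1or
          · exact key u1 _ hu1 hb2or
          · exact key u2 _ hu2 hb2or
          · exact key u3 _ hu3 hb2or
          · exact key u1 _ hu1 hb3or
          · exact key u2 _ hu2 hb3or
          · exact key u3 _ hu3 hb3or
      · -- |S2| = 2 : micro-world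
        have hS2two : S2.card = 2 := by omega
        obtain ⟨uu, uu', huu, hS2eq⟩ := Finset.card_eq_two.mp hS2two
        have huuS : uu ∈ S2 := by rw [hS2eq]; simp
        have huu'S : uu' ∈ S2 := by rw [hS2eq]; simp
        have hup := hS2props uu huuS
        have hu'p := hS2props uu' huu'S
        -- D is exactly the five-element set, in particular w0 ∈ D
        have hDcover : D ⊆ insert uu (insert uu' ({t1, t2, w0} : Finset V)) := by
          intro x hx
          have h := hDsub hx
          rw [Finset.mem_union, hS2eq] at h
          simp only [Finset.mem_insert, Finset.mem_singleton] at h ⊢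
          rcases h with (h|h) | (h|h|h)
          · exact Or.inl h
          · exact Or.inr (Or.inl h)
          · exact Or.inr (Or.inr (Or.inl h))
          · exact Or.inr (Or.inr (Or.inr (Or.inl h)))
          · exact Or.inr (Or.inr (Or.inr (Or.inr h)))
        have hw0D : w0 ∈ D := by
          by_contra hw0D
          have hcard5 : D.card ≤ 4 := by
            have hsub2 : D ⊆ insert uu (insert uu' ({t1, t2} : Finset V)) := by
              intro x hx
              have h := hDcover hx
              simp only [Finset.mem_insert, Finset.mem_singleton] at h ⊢
              rcases h with h|h|h|h|h
              · exact Or.inl h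
              · exact Or.inr (Or.inl h)
              · exact Or.inr (Or.inr (Or.inl h))
              · exact Or.inr (Or.inr (Or.inr h))
              · exact absurd (h ▸ hx) hw0D
            refine le_trans (Finset.card_le_card hsub2) ?_
            refine le_trans (Finset.card_insert_le _ _) ?_
            refine Nat.succ_le_succ (le_trans (Finset.card_insert_le _ _) ?_)
            refine Nat.succ_le_succ (le_trans (Finset.card_insert_le _ _) ?_)
            simp
          omega
        obtain ⟨tw0, htw0⟩ := (hDmem w0).mp hw0D
        by_cases hexw : ∃ tw, w0 ∈ X tw ∧ tw ≠ uu ∧ tw ≠ uu'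
        · -- attempt 1 succeeds
          obtain ⟨tw, htw, htwu, htwu'⟩ := hexw
          obtain ⟨bu, hbu, hbuor⟩ := hwfun uu huuS
          obtain ⟨bu', hbu', hbu'or⟩ := hwfun uu' huu'S
          have key : ∀ (a b : V), a ∈ S2 → (b = t1 ∨ b = t2) → b ≠ a := by
            intro a b ha hb h
            rcases hb with rfl | rfl
            · exact (hS2props a ha).2.1 h.symm
            · exact (hS2props a ha).2.2.1 h.symm
          have keyw : ∀ (b : V), (b = t1 ∨ b = t2) → b ≠ w0 := by
            intro b hb
            rcases hb with rfl | rfl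
            · exact ht1p.1
            · exact ht2p.1
          refine ⟨![bu, bu', tw],
            ![uu, uu', w0], inj_vec3 huu hup.2.2.2 hu'p.2.2.2, ?_, ?_⟩
          · intro i; fin_cases i
            · exact hbu
            · exact hbu'
            · exact htw
          · intro i j
            fin_cases i <;> fin_cases j
            · exact key uu _ huuS hbuor
            · exact key uu' _ huu'S hbuor
            · exact keyw _ hbuor
            · exact key uu _ huuS hbu'or
            · exact key uu' _ huu'S hbu'or
            · exact keyw _ hbu'or
            · exact htwu
            · exact htwu'
            · exact fun h => ((hXdef tw w0).mp htw).1 h.symm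
        · -- contradiction via the constant-distance argument
          exfalso
          push_neg at hexw
          -- uh ∈ {uu, uu'} with w0 ∈ X uh
          have huht : tw0 = uu ∨ tw0 = uu' := by
            by_cases h : tw0 = uu
            · exact Or.inl h
            · exact Or.inr (hexw tw0 htw0 h)
          -- facts about uh (call it tw0)
          have huhS2 : tw0 ∈ S2 := by rcases huht with rfl | rfl <;> assumption
          have huhp := hS2props tw0 huhS2
          -- pick v outside D
          have hDcard5 : D.card ≤ 5 := by
            refine le_trans (Finset.card_le_card hDcover) ?_
            refine le_trans (Finset.card_insert_le _ _) ?_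
            refine Nat.succ_le_succ (le_trans (Finset.card_insert_le _ _) ?_)
            refine Nat.succ_le_succ (le_trans (Finset.card_insert_le _ _) ?_)
            refine Nat.succ_le_succ (le_trans (Finset.card_insert_le _ _) ?_)
            simp
          have hcompl := Finset.card_add_card_compl D
          rw [hn] at hcompl
          obtain ⟨v, hv⟩ := Finset.card_pos.mp (by omega : 0 < (Dᶜ).card)
          have hvD : v ∉ D := Finset.mem_compl.mp hv
          have hvnX : ∀ t, v ∉ X t := by
            intro t ht
            exact hvD ((hDmem v).mpr ⟨t, ht⟩)
          -- memberships of relevant vertices in D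
          have ht1D : t1 ∈ D := (hDmem t1).mpr ⟨w0, ht1⟩
          have ht2D : t2 ∈ D := (hDmem t2).mpr ⟨w0, ht2⟩
          have huhD : tw0 ∈ D := by
            rcases huhp.1 with h | h
            · exact (hDmem tw0).mpr ⟨t1, h⟩
            · exact (hDmem tw0).mpr ⟨t2, h⟩
          have hvuh : v ≠ tw0 := fun h => hvD (h ▸ huhD)
          have hvw0 : v ≠ w0 := fun h => hvD (h ▸ hw0D)
          -- uh ∉ X v since witnesses of uh are in {t1,t2}
          have huhnXv : tw0 ∉ X v := by
            intro h
            have := hB1' v tw0 h huhp.2.1 huhp.2.2.1 huhp.2.2.2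
            rcases this with rfl | rfl
            · exact hvD ht1D
            · exact hvD ht2D
          -- w0 ∉ X v since witnesses of w0 are in {uu, uu'}
          have hw0nXv : w0 ∉ X v := by
            intro h
            have : v = uu ∨ v = uu' := by
              by_cases hh : v = uu
              · exact Or.inl hh
              · exact Or.inr (hexw v h hh)
            rcases this with rfl | rfl
            · obtain ⟨b, hb, _⟩ := hwfun v huuS
              exact hvD ((hDmem v).mpr ⟨b, hb⟩)
            · obtain ⟨b, hb, _⟩ := hwfun v huu'S
              exact hvD ((hDmem v).mpr ⟨b, hb⟩)
          -- generic distances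
          have hgen : ∀ a b : V, b ≠ a → b ∉ X a → G.dist a b = c a := by
            intro a b hne hnx
            by_contra h
            exact hnx ((hXdef a b).mpr ⟨hne, h⟩)
          have hcu : c tw0 = c v := by
            have h1 : G.dist tw0 v = c tw0 := hgen tw0 v hvuh (hvnX tw0)
            have h2 : G.dist v tw0 = c v := hgen v tw0 hvuh.symm huhnXv
            rw [SimpleGraph.dist_comm (u := tw0) (v := v)] at h1
            rw [h1] at h2
            exact h2
          have hcw : c w0 = c v := by
            have h1 : G.dist w0 v = c w0 := hgen w0 v hvw0 (hvnX w0)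
            have h2 : G.dist v w0 = c v := hgen v w0 hvw0.symm hw0nXv
            rw [SimpleGraph.dist_comm (u := w0) (v := v)] at h1
            rw [h1] at h2
            exact h2
          -- the contradiction: dist tw0 w0 both = c w0 and ≠ c tw0 = c w0
          have hX1 := (hXdef tw0 w0).mp htw0
          -- uh ∉ X w0 = {t1,t2}-side: tw0 ∉ X w0
          have huhnXw0 : tw0 ∉ X w0 := by
            intro h
            have hXw0sub : ({t1, t2} : Finset V) ⊆ X w0 := by
              intro x hx
              simp only [Finset.mem_insert, Finset.mem_singleton] at hx
              rcases hx with rfl | rfl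
              · exact ht1
              · exact ht2
            have hXw0eq : X w0 = ({t1, t2} : Finset V) :=
              (Finset.eq_of_subset_of_card_le hXw0sub
                (by rw [Finset.card_insert_of_notMem (by simp [ht12]),
                        Finset.card_singleton]
                    have := hXcard w0
                    omega)).symm
            rw [hXw0eq] at h
            simp only [Finset.mem_insert, Finset.mem_singleton] at h
            rcases h with rfl | rfl
            · exact huhp.2.1 rfl
            · exact huhp.2.2.1 rfl
          have h2 : G.dist w0 tw0 = c w0 := hgen w0 tw0 (fun h => huhp.2.2.2 h) huhnXw0
          have h3 : G.dist tw0 w0 = c w0 := by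
            rw [SimpleGraph.dist_comm (u := tw0) (v := w0)]
            exact h2
          rw [hcw, ← hcu] at h3
          exact hX1.2 h3
  · -- THIN case
    push_neg at hfat
    have hthin : ∀ t, (X t).card ≤ 1 := by
      intro t; have := hfat t; omega
    have hXsing : ∀ a b1 b2 : V, b1 ∈ X a → b2 ∈ X a → b1 = b2 := by
      intro a b1 b2 h1 h2
      exact Finset.card_le_one.mp (hthin a) b1 h1 b2 h2
    have hgen : ∀ a b : V, b ≠ a → b ∉ X a → G.dist a b = c a := by
      intro a b hne hnx
      by_contra h
      exact hnx ((hXdef a b).mpr ⟨hne, h⟩)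
    -- the builder
    have build : ∀ y1 y2 y3 w1 w2 w3 : V, y1 ≠ y2 → y1 ≠ y3 → y2 ≠ y3 →
        y1 ∈ X w1 → y2 ∈ X w2 → y3 ∈ X w3 → w1 ≠ y2 → w1 ≠ y3 →
        w2 ≠ y1 → w2 ≠ y3 → w3 ≠ y1 → w3 ≠ y2 →
        ∃ w y : Fin 3 → V, Function.Injective y ∧ (∀ i, y i ∈ X (w i)) ∧
          (∀ i j : Fin 3, w i ≠ y j) := by
      intro y1 y2 y3 w1 w2 w3 h12 h13 h23 m1 m2 m3 a12 a13 a21 a23 a31 a32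
      refine ⟨![w1, w2, w3], ![y1, y2, y3], inj_vec3 h12 h13 h23, ?_, ?_⟩
      · intro i; fin_cases i
        · exact m1
        · exact m2
        · exact m3
      · intro i j
        fin_cases i <;> fin_cases j
        · exact ((hXdef w1 y1).mp m1).1.symm
        · exact a12
        · exact a13
        · exact a21
        · exact ((hXdef w2 y2).mp m2).1.symm
        · exact a23
        · exact a31
        · exact a32
        · exact ((hXdef w3 y3).mp m3).1.symm
    -- mutuality
    have hMUT : ∀ y t : V, y ∈ X t → c y = c t → t ∈ X y := by
      intro y t hy hc
      have h1 := (hXdef t y).mp hy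
      refine (hXdef y t).mpr ⟨h1.1.symm, ?_⟩
      rw [SimpleGraph.dist_comm (u := y) (v := t), hc]
      exact h1.2
    -- the counting lemma: different base distances force a rich endpoint
    have hCC : ∀ a b : V, a ≠ b → c a ≠ c b → (Wit a).card + (Wit b).card + 4 ≥ n := by
      intro a b hab hcab
      set T' : Finset V := ((Finset.univ \ (X a ∪ X b)).erase a).erase b with hT'
      have hT'card : n - 4 ≤ T'.card := by
        have h1 : (Finset.univ \ (X a ∪ X b)).card ≥ n - 2 := by
          have h2 := Finset.card_sdiff_add_card_eq_card
            (Finset.subset_univ (X a ∪ X b))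
          have h3 := Finset.card_union_le (X a) (X b)
          have h4 := hthin a
          have h5 := hthin b
          rw [Finset.card_univ, hn] at h2
          omega
        have h6 : T'.card ≥ (Finset.univ \ (X a ∪ X b)).card - 2 := by
          rw [hT']
          have e1 := Finset.card_erase_le (s := Finset.univ \ (X a ∪ X b)) (a := a)
          have e2 := Finset.card_erase_le (s := (Finset.univ \ (X a ∪ X b)).erase a) (a := b)
          have e3 := Finset.pred_card_le_card_erase
            (s := Finset.univ \ (X a ∪ X b)) (a := a)
          have e4 := Finset.pred_card_le_card_erase
            (s := (Finset.univ \ (X a ∪ X b)).erase a) (a := b)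
          omega
        omega
      have hsub : T' ⊆ Wit a ∪ Wit b := by
        intro t ht
        rw [hT', Finset.mem_erase, Finset.mem_erase, Finset.mem_sdiff,
          Finset.mem_union] at ht
        obtain ⟨htb, hta, _, htX⟩ := ht
        push_neg at htX
        have hda : G.dist a t = c a := hgen a t hta htX.1
        have hdb : G.dist b t = c b := hgen b t htb htX.2
        rw [Finset.mem_union, hWitmem, hWitmem]
        by_contra hcon
        push_neg at hcon
        have h1 : G.dist t a = c t := hgen t a (fun h => hta h.symm) hcon.1
        have h2 : G.dist t b = c t := hgen t b (fun h => htb h.symm) hcon.2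
        rw [SimpleGraph.dist_comm (u := t) (v := a)] at h1
        rw [SimpleGraph.dist_comm (u := t) (v := b)] at h2
        rw [hda] at h1
        rw [hdb] at h2
        exact hcab (h1.trans h2.symm)
      have := Finset.card_le_card hsub
      have := Finset.card_union_le (Wit a) (Wit b)
      omega
    -- classification
    set R : Finset V := D.filter (fun y => 3 ≤ (Wit y).card) with hR
    set Ffree : Finset V := D.filter (fun y => ∃ t, y ∈ X t ∧ t ∉ D) with hFfree
    set GOOD : Finset V := R ∪ Ffree with hGOOD
    have hGOODD : GOOD ⊆ D := by
      rw [hGOOD, hR, hFfree]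
      intro x hx
      rcases Finset.mem_union.mp hx with h | h
      · exact (Finset.mem_filter.mp h).1
      · exact (Finset.mem_filter.mp h).1
    have hgoodwit : ∀ g ∈ GOOD, ∀ z1 z2 : V, z1 ∈ D → z2 ∈ D →
        ∃ t, g ∈ X t ∧ t ≠ z1 ∧ t ≠ z2 := by
      intro g hg z1 z2 hz1 hz2
      rcases Finset.mem_union.mp hg with h | h
      · have h3 := (Finset.mem_filter.mp h).2
        have : 0 < ((Wit g).erase z1 |>.erase z2).card := by
          have e1 := Finset.card_erase_le (s := Wit g) (a := z1)
          have e3 := Finset.pred_card_le_card_erase (s := Wit g) (a := z1)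
          have e4 := Finset.pred_card_le_card_erase (s := (Wit g).erase z1) (a := z2)
          omega
        obtain ⟨t, ht⟩ := Finset.card_pos.mp this
        rw [Finset.mem_erase, Finset.mem_erase] at ht
        exact ⟨t, (hWitmem g t).mp ht.2.2, ht.2.1, ht.1⟩
      · obtain ⟨t, hgt, htD⟩ := (Finset.mem_filter.mp h).2
        exact ⟨t, hgt, fun hh => htD (hh ▸ hz1), fun hh => htD (hh ▸ hz2)⟩
    by_cases hg3 : 3 ≤ GOOD.card
    · obtain ⟨g1, g2, g3, hgm1, hgm2, hgm3, e12, e13, e23⟩ := exists_three hg3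
      have hg1D := hGOODD hgm1
      have hg2D := hGOODD hgm2
      have hg3D := hGOODD hgm3
      obtain ⟨t1', ht1m, ht1a, ht1b⟩ := hgoodwit g1 hgm1 g2 g3 hg2D hg3D
      obtain ⟨t2', ht2m, ht2a, ht2b⟩ := hgoodwit g2 hgm2 g1 g3 hg1D hg3D
      obtain ⟨t3', ht3m, ht3a, ht3b⟩ := hgoodwit g3 hgm3 g1 g2 hg1D hg2D
      exact build g1 g2 g3 t1' t2' t3' e12 e13 e23 ht1m ht2m ht3m
        ht1a ht1b ht2a ht2b ht3a ht3b
    · -- poor world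
      push_neg at hg3
      set P : Finset V := D \ GOOD with hPdef
      have hPD : P ⊆ D := Finset.sdiff_subset
      have hPcard : 3 ≤ P.card := by
        have h1 : D.card - GOOD.card ≤ P.card := by
          rw [hPdef]; exact Finset.le_card_sdiff GOOD D
        have := Finset.card_le_card hGOODD
        omega
      have hPfacts : ∀ y ∈ P, (Wit y).card ≤ 2 ∧ (∀ t, y ∈ X t → t ∈ D) := by
        intro y hy
        rw [hPdef, Finset.mem_sdiff] at hy
        have hyG := hy.2
        rw [hGOOD, Finset.mem_union] at hyG
        push_neg at hyG
        constructor
        · have := hyG.1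
          rw [hR, Finset.mem_filter] at this
          push_neg at this
          have := this hy.1
          omega
        · intro t hyt
          by_contra htD
          exact hyG.2 (by
            rw [hFfree, Finset.mem_filter]
            exact ⟨hy.1, t, hyt, htD⟩)
      have hkey : ∀ y ∈ P, ∀ t, y ∈ X t → (t ∈ X y ∧ t ∈ D) ∨ t ∈ R := by
        intro y hy t hyt
        have htD : t ∈ D := (hPfacts y hy).2 t hyt
        by_cases hc : c y = c t
        · exact Or.inl ⟨hMUT y t hyt hc, htD⟩
        · right
          have hne : y ≠ t := ((hXdef t y).mp hyt).1
          have := hCC y t hne hc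
          have h2 := (hPfacts y hy).1
          rw [hR, Finset.mem_filter]
          exact ⟨htD, by omega⟩
      set Mset : Finset V := P.filter (fun y => ∃ p, p ∈ P ∧ p ∈ X y ∧ y ∈ X p) with hMset
      set Qset : Finset V := P \ Mset with hQset
      have hMsub : Mset ⊆ P := Finset.filter_subset _ _
      have hPsplit : Mset.card + Qset.card = P.card := by
        rw [hQset]
        have := Finset.card_sdiff_add_card_eq_card hMsub
        omega
      have hQD : Qset ⊆ P := Finset.sdiff_subset
      -- every witness of a Q-member is GOOD
      have hQwit : ∀ q ∈ Qset, ∀ t, q ∈ X t → t ∈ GOOD := by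
        intro q hq t hqt
        have hqP : q ∈ P := hQD hq
        rcases hkey q hqP t hqt with ⟨htXq, htD⟩ | hr
        · -- t is a mutual partner; t cannot be in P since q ∉ Mset
          by_cases htP : t ∈ P
          · exfalso
            rw [hQset, Finset.mem_sdiff] at hq
            exact hq.2 (by
              rw [hMset, Finset.mem_filter]
              exact ⟨hqP, t, htP, htXq, hqt⟩)
          · rw [hPdef, Finset.mem_sdiff] at htP
            push_neg at htP
            exact htP htD
        · exact Finset.mem_union.mpr (Or.inl hr)
      have hQpick : ∀ q ∈ Qset, ∃ t, q ∈ X t ∧ t ∈ GOOD := by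
        intro q hq
        obtain ⟨t, ht⟩ := (hDmem q).mp (hPD (hQD hq))
        exact ⟨t, ht, hQwit q hq t ht⟩
      -- partners of M-members are M-members
      have hMpick : ∀ m ∈ Mset, ∃ p, p ∈ Mset ∧ p ∈ X m ∧ m ∈ X p := by
        intro m hm
        have hmm := (Finset.mem_filter.mp hm).2
        obtain ⟨p, hpP, hpm, hmp⟩ := hmm
        refine ⟨p, ?_, hpm, hmp⟩
        rw [hMset, Finset.mem_filter]
        exact ⟨hpP, m, (Finset.mem_filter.mp hm).1, hmp, hpm⟩
      have hGP : ∀ x ∈ GOOD, ∀ z ∈ P, x ≠ z := by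
        intro x hx z hz h
        subst h
        rw [hPdef, Finset.mem_sdiff] at hz
        exact hz.2 hx
      have hMQ : ∀ x ∈ Mset, ∀ z ∈ Qset, x ≠ z := by
        intro x hx z hz h
        subst h
        rw [hQset, Finset.mem_sdiff] at hz
        exact hz.2 hx
      have hDsplit : P.card + GOOD.card = D.card := by
        have := Finset.card_sdiff_add_card_eq_card hGOODD
        rw [← hPdef] at this
        exact this
      by_cases hq3 : 3 ≤ Qset.card
      · -- three Q-targets
        obtain ⟨q1, q2, q3, hq1, hq2, hq3m, eq12, eq13, eq23⟩ := exists_three hq3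
        obtain ⟨t1', ht1m, ht1G⟩ := hQpick q1 hq1
        obtain ⟨t2', ht2m, ht2G⟩ := hQpick q2 hq2
        obtain ⟨t3', ht3m, ht3G⟩ := hQpick q3 hq3m
        exact build q1 q2 q3 t1' t2' t3' eq12 eq13 eq23 ht1m ht2m ht3m
          (hGP t1' ht1G q2 (hQD hq2)) (hGP t1' ht1G q3 (hQD hq3m))
          (hGP t2' ht2G q1 (hQD hq1)) (hGP t2' ht2G q3 (hQD hq3m))
          (hGP t3' ht3G q1 (hQD hq1)) (hGP t3' ht3G q2 (hQD hq2))
      push_neg at hq3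
      by_cases hq2 : Qset.card = 2
      · -- two Q-targets and one M-target
        obtain ⟨q1, hq1, q2, hq2m, eq12⟩ := Finset.one_lt_card.mp (by omega : 1 < Qset.card)
        have hm1ex : 0 < Mset.card := by omega
        obtain ⟨m1, hm1⟩ := Finset.card_pos.mp hm1ex
        obtain ⟨p1, hp1M, hp1X, hm1X⟩ := hMpick m1 hm1
        obtain ⟨t1', ht1m, ht1G⟩ := hQpick q1 hq1
        obtain ⟨t2', ht2m, ht2G⟩ := hQpick q2 hq2m
        exact build q1 q2 m1 t1' t2' p1 eq12
          ((hMQ m1 hm1 q1 hq1).symm) ((hMQ m1 hm1 q2 hq2m).symm)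
          ht1m ht2m hm1X
          (hGP t1' ht1G q2 (hQD hq2m)) (hGP t1' ht1G m1 (hMsub hm1))
          (hGP t2' ht2G q1 (hQD hq1)) (hGP t2' ht2G m1 (hMsub hm1))
          (hMQ p1 hp1M q1 hq1) (hMQ p1 hp1M q2 hq2m)
      by_cases hq1c : Qset.card = 1
      · obtain ⟨q, hq⟩ := Finset.card_pos.mp (by omega : 0 < Qset.card)
        obtain ⟨tq, htqm, htqG⟩ := hQpick q hq
        by_cases hm3 : 3 ≤ Mset.card
        · -- q plus two M-targets
          obtain ⟨m1, hm1⟩ := Finset.card_pos.mp (by omega : 0 < Mset.card)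
          obtain ⟨p1, hp1M, hp1X, hm1X⟩ := hMpick m1 hm1
          have : 0 < ((Mset.erase m1).erase p1).card := by
            have e3 := Finset.pred_card_le_card_erase (s := Mset) (a := m1)
            have e4 := Finset.pred_card_le_card_erase (s := Mset.erase m1) (a := p1)
            omega
          obtain ⟨m2, hm2e⟩ := Finset.card_pos.mp this
          have hm2p1 : m2 ≠ p1 := Finset.ne_of_mem_erase hm2e
          have hm2m1 : m2 ≠ m1 := Finset.ne_of_mem_erase (Finset.mem_of_mem_erase hm2e)
          have hm2 : m2 ∈ Mset := Finset.mem_of_mem_erase (Finset.mem_of_mem_erase hm2e)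
          obtain ⟨p2, hp2M, hp2X, hm2X⟩ := hMpick m2 hm2
          have hp2m1 : p2 ≠ m1 := by
            intro h
            rw [h] at hm2X
            exact hm2p1 (hXsing m1 m2 p1 hm2X hp1X)
          exact build q m1 m2 tq p1 p2
            ((hMQ m1 hm1 q hq).symm) ((hMQ m2 hm2 q hq).symm) hm2m1.symm
            htqm hm1X hm2X
            (hGP tq htqG m1 (hMsub hm1)) (hGP tq htqG m2 (hMsub hm2))
            (hMQ p1 hp1M q hq) hm2p1.symm
            (hMQ p2 hp2M q hq) hp2m1
        · -- q, one M-target, one GOOD-target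
          push_neg at hm3
          have hmc2 : Mset.card = 2 := by omega
          have hgc2 : GOOD.card = 2 := by omega
          obtain ⟨m1, hm1⟩ := Finset.card_pos.mp (by omega : 0 < Mset.card)
          obtain ⟨p1, hp1M, hp1X, hm1X⟩ := hMpick m1 hm1
          have htqGOOD : tq ∈ GOOD := htqG
          have : 0 < (GOOD.erase tq).card := by
            have e3 := Finset.pred_card_le_card_erase (s := GOOD) (a := tq)
            omega
          obtain ⟨g, hge⟩ := Finset.card_pos.mp this
          have hgtq : g ≠ tq := Finset.ne_of_mem_erase hge
          have hgG : g ∈ GOOD := Finset.mem_of_mem_erase hge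
          obtain ⟨tg, htgm, htg1, htg2⟩ := hgoodwit g hgG m1 q
            (hPD (hMsub hm1)) (hPD (hQD hq))
          exact build m1 q g p1 tq tg
            (hMQ m1 hm1 q hq) ((hGP g hgG m1 (hMsub hm1)).symm)
            ((hGP g hgG q (hQD hq)).symm)
            hm1X htqm htgm
            (hMQ p1 hp1M q hq) ((hGP g hgG p1 (hMsub hp1M)).symm)
            (hGP tq htqG m1 (hMsub hm1)) hgtq.symm
            htg1 htg2
      · -- Qset is empty
        have hq0 : Qset.card = 0 := by omega
        have hmc3 : 3 ≤ Mset.card := by omega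
        obtain ⟨m1, hm1⟩ := Finset.card_pos.mp (by omega : 0 < Mset.card)
        obtain ⟨p1, hp1M, hp1X, hm1X⟩ := hMpick m1 hm1
        have hp1m1 : p1 ≠ m1 := ((hXdef m1 p1).mp hp1X).1
        have h2e : 0 < ((Mset.erase m1).erase p1).card := by
          have e3 := Finset.pred_card_le_card_erase (s := Mset) (a := m1)
          have e4 := Finset.pred_card_le_card_erase (s := Mset.erase m1) (a := p1)
          omega
        obtain ⟨m2, hm2e⟩ := Finset.card_pos.mp h2e
        have hm2p1 : m2 ≠ p1 := Finset.ne_of_mem_erase hm2e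
        have hm2m1 : m2 ≠ m1 := Finset.ne_of_mem_erase (Finset.mem_of_mem_erase hm2e)
        have hm2 : m2 ∈ Mset := Finset.mem_of_mem_erase (Finset.mem_of_mem_erase hm2e)
        obtain ⟨p2, hp2M, hp2X, hm2X⟩ := hMpick m2 hm2
        have hp2m1 : p2 ≠ m1 := by
          intro h
          rw [h] at hm2X
          exact hm2p1 (hXsing m1 m2 p1 hm2X hp1X)
        by_cases hm5 : 5 ≤ Mset.card
        · -- three M-pairs
          have h3e : 0 < ((((Mset.erase m1).erase p1).erase m2).erase p2).card := by
            have e1 := Finset.pred_card_le_card_erase (s := Mset) (a := m1)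
            have e2 := Finset.pred_card_le_card_erase (s := Mset.erase m1) (a := p1)
            have e3 := Finset.pred_card_le_card_erase
              (s := (Mset.erase m1).erase p1) (a := m2)
            have e4 := Finset.pred_card_le_card_erase
              (s := ((Mset.erase m1).erase p1).erase m2) (a := p2)
            omega
          obtain ⟨m3, hm3e⟩ := Finset.card_pos.mp h3e
          have hm3p2 : m3 ≠ p2 := Finset.ne_of_mem_erase hm3e
          have hm3m2 : m3 ≠ m2 := Finset.ne_of_mem_erase (Finset.mem_of_mem_erase hm3e)
          have hm3p1 : m3 ≠ p1 := Finset.ne_of_mem_erase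
            (Finset.mem_of_mem_erase (Finset.mem_of_mem_erase hm3e))
          have hm3m1 : m3 ≠ m1 := Finset.ne_of_mem_erase
            (Finset.mem_of_mem_erase (Finset.mem_of_mem_erase (Finset.mem_of_mem_erase hm3e)))
          have hm3 : m3 ∈ Mset := Finset.mem_of_mem_erase (Finset.mem_of_mem_erase
            (Finset.mem_of_mem_erase (Finset.mem_of_mem_erase hm3e)))
          obtain ⟨p3, hp3M, hp3X, hm3X⟩ := hMpick m3 hm3
          have hp3m1 : p3 ≠ m1 := by
            intro h; rw [h] at hm3X
            exact hm3p1 (hXsing m1 m3 p1 hm3X hp1X)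
          have hp3m2 : p3 ≠ m2 := by
            intro h; rw [h] at hm3X
            exact hm3p2 (hXsing m2 m3 p2 hm3X hp2X)
          exact build m1 m2 m3 p1 p2 p3
            hm2m1.symm hm3m1.symm hm3m2.symm
            hm1X hm2X hm3X
            hm2p1.symm hm3p1.symm hp2m1 hm3p2.symm hp3m1 hp3m2
        · push_neg at hm5
          by_cases hm4 : Mset.card = 4
          · -- two M-pairs and one GOOD-target
            have hgc1 : 1 ≤ GOOD.card := by omega
            obtain ⟨g, hgG⟩ := Finset.card_pos.mp (by omega : 0 < GOOD.card)
            obtain ⟨tg, htgm, htg1, htg2⟩ := hgoodwit g hgG m1 m2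
              (hPD (hMsub hm1)) (hPD (hMsub hm2))
            exact build m1 m2 g p1 p2 tg
              hm2m1.symm ((hGP g hgG m1 (hMsub hm1)).symm)
              ((hGP g hgG m2 (hMsub hm2)).symm)
              hm1X hm2X htgm
              hm2p1.symm ((hGP g hgG p1 (hMsub hp1M)).symm)
              hp2m1 ((hGP g hgG p2 (hMsub hp2M)).symm)
              htg1 htg2
          · -- Mset.card = 3 : impossible
            exfalso
            have hmc3' : Mset.card = 3 := by omega
            have hsub3 : ({m1, p1, m2} : Finset V) ⊆ Mset := by
              intro x hx
              simp only [Finset.mem_insert, Finset.mem_singleton] at hx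
              rcases hx with rfl | rfl | rfl
              · exact hm1
              · exact hp1M
              · exact hm2
            have hcard3 : ({m1, p1, m2} : Finset V).card = 3 := by
              rw [Finset.card_insert_of_notMem (by
                  simp only [Finset.mem_insert, Finset.mem_singleton]
                  push_neg
                  exact ⟨hp1m1.symm, hm2m1.symm⟩),
                Finset.card_insert_of_notMem (by
                  simp only [Finset.mem_singleton]
                  exact fun h => hm2p1 h.symm), Finset.card_singleton]
            have hMeq : Mset = ({m1, p1, m2} : Finset V) :=
              (Finset.eq_of_subset_of_card_le hsub3 (by omega)).symm
            have hp2mem : p2 ∈ ({m1, p1, m2} : Finset V) := hMeq ▸ hp2M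
            have hp2m2 : p2 ≠ m2 := ((hXdef m2 p2).mp hp2X).1
            simp only [Finset.mem_insert, Finset.mem_singleton] at hp2mem
            rcases hp2mem with h | h | h
            · exact hp2m1 h
            · rw [h] at hm2X
              exact hm2m1 (hXsing p1 m2 m1 hm2X hm1X)
            · exact hp2m2 h

/-- Existence of the three separated pairs. -/
theorem exists_config (hG : G.Connected) {n : ℕ} (hn : Fintype.card V = n)
    (h9 : 9 ≤ n) (hτ : 2 * twinNumber G ≤ n) :
    ∃ u v w : Fin 3 → V, Function.Injective u ∧ Function.Injective v ∧
      (∀ i j, u i ≠ v j) ∧ (∀ i j, w i ≠ u j) ∧ (∀ i j, w i ≠ v j) ∧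
      ∀ i, G.dist (u i) (w i) ≠ G.dist (v i) (w i) := by
  classical
  by_cases hgood : ∃ (w0 : V) (a b : Fin 3 → V), Function.Injective a ∧
      Function.Injective b ∧ (∀ i j, a i ≠ b j) ∧ (∀ i, a i ≠ w0) ∧ (∀ i, b i ≠ w0) ∧
      ∀ i, G.dist w0 (a i) ≠ G.dist w0 (b i)
  · obtain ⟨w0, a, b, ha, hb, hab, haw, hbw, hsp⟩ := hgood
    refine ⟨a, b, fun _ => w0, ha, hb, hab, fun i j => (haw j).symm,
      fun i j => (hbw j).symm, fun i => ?_⟩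
    rw [SimpleGraph.dist_comm (u := a i) (v := w0), SimpleGraph.dist_comm (u := b i) (v := w0)]
    exact hsp i
  · have hswamp : ∀ w0 : V, ∃ cc : ℕ,
        ((Finset.univ.erase w0).filter (fun x => G.dist w0 x ≠ cc)).card ≤ 2 := by
      intro w0
      refine fiber_lemma hn h9 w0 (G.dist w0) ?_
      intro hex
      exact hgood ⟨w0, hex⟩
    choose c hc using hswamp
    set X : V → Finset V :=
      fun t => (Finset.univ.erase t).filter (fun x => G.dist t x ≠ c t) with hX
    have hXdef : ∀ t x, x ∈ X t ↔ (x ≠ t ∧ G.dist t x ≠ c t) := by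
      intro t x
      rw [hX]
      simp [Finset.mem_filter, Finset.mem_erase]
    obtain ⟨w, y, hyinj, hyX, hwy⟩ := selection hG hn h9 hτ c X hXdef hc
    exact zassign hG hn h9 c X hXdef hc w y hyinj hyX hwy

end Exists

theorem partitionDim_le_of_twinNumber_small_aux {V : Type*} [Fintype V]
    (G : SimpleGraph V) (hG : G.Connected) (n : ℕ) (hn : Fintype.card V = n)
    (h9 : 9 ≤ n) (hτ : 2 * twinNumber G ≤ n) :
    partitionDim G ≤ n - 3 := by
  obtain ⟨u, v, w, hu, hv, huv, hwu, hwv, hsp⟩ := exists_config hG hn h9 hτ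
  exact partitionDim_le_of_pairs hG hn h9 u v w hu hv huv hwu hwv hsp

/-- If `G` is a connected graph of order `n ≥ 9` with `2·τ(G) ≤ n`,
then `β_p(G) ≤ n - 3`. -/
theorem partitionDim_le_of_twinNumber_small {V : Type*} [Fintype V]
    (G : SimpleGraph V) (hG : G.Connected) (n : ℕ) (hn : Fintype.card V = n)
    (h9 : 9 ≤ n) (hτ : 2 * twinNumber G ≤ n) :
    partitionDim G ≤ n - 3 :=
  partitionDim_le_of_twinNumber_small_aux G hG n hn h9 hτ
end
end

section
/- Let G be a finite connected simple graph of order n, not isomorphic to the complete graph K_n, such that 2·τ(G) > n, and let W be its (unique) twin class of cardinality τ(G). Then τ(G) ≤ β_p(G) and 2·β_p(G) ≤ n + τ(G). Moreover: (1) β_p(G) = τ(G) if and only if W induces an empty (edgeless) subgraph of G; and (2) τ(G) < β_p(G) and 2·β_p(G) ≤ n + τ(G) holds with W inducing a complete subgraph of G if and only if W induces a complete subgraph of G (equivalently, β_p(G) > τ(G) if and only if the subgraph of G induced by W is complete). -/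
/-!
Twins are at the same distance from every other vertex, so a locating partition puts the
vertices of the twin class `W` into distinct parts, and `τ ≤ β`. As `|Wᶜ| < |W|`, every vertex
outside `W` can be paired with its own vertex of `W` so that some `w₀ ∈ W` stays unpaired; the
pairs and the remaining singletons form a partition with `|W|` parts.

If `W` is independent this partition is locating: a neighbour of `W` is separated from its
partner by `{w₀}`; any other vertex `x ∉ W`, not being a twin of the vertices of `W`, differs
from them on some `z ∉ W`, and the pair of `z` is adjacent to exactly one of `x` and its
partner.

If `W` is a clique, no partition with `|W|` parts locates: a vertex adjacent to `W` sees every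
part as the twin in its own part does. Instead, only the vertices outside a set `Y ⊆ Wᶜ` are
paired, the vertices of `Y` forming singleton parts; `Y` is a dominating set of an auxiliary
graph on `Wᶜ` without isolated vertices, so Ore's bound gives `|Y| ≤ |Wᶜ| / 2`, whence
`2β ≤ 2|W| + |Wᶜ| = n + τ`.
-/

open Classical SimpleGraph

noncomputable section

section Twins

variable {V : Type*} {G : SimpleGraph V} {u v w x a b c d : V}

theorem isTwin_iff_adj_iff :
    IsTwin G u v ↔ ∀ w, w ≠ u → w ≠ v → (G.Adj u w ↔ G.Adj v w) := by
  simp only [IsTwin, Set.ext_iff, Set.mem_sdiff, mem_neighborSet, Set.mem_singleton_iff]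
  refine ⟨fun h w hu hv => by simpa [hu, hv] using h w, fun h w => ?_⟩
  by_cases hu : w = u
  · subst hu; simp
  by_cases hv : w = v
  · subst hv; simp
  simp [hu, hv, h w hu hv]

theorem IsTwin.adj_iff (h : IsTwin G u v) (hu : w ≠ u) (hv : w ≠ v) :
    G.Adj u w ↔ G.Adj v w :=
  isTwin_iff_adj_iff.1 h w hu hv

theorem IsTwin.symm (h : IsTwin G u v) : IsTwin G v u :=
  Eq.symm h

theorem IsTwin.trans (h₁ : IsTwin G u v) (h₂ : IsTwin G v w) : IsTwin G u w := by
  rw [isTwin_iff_adj_iff] at *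
  intro z hzu hzw
  by_cases huv : u = v
  · subst huv; exact h₂ z hzu hzw
  by_cases hvw : v = w
  · subst hvw; exact h₁ z hzu hzw
  by_cases hzv : z = v
  · subst hzv
    by_cases huw : u = w
    · subst huw; rfl
    have := h₁ w (Ne.symm huw) (Ne.symm hvw)
    have := h₂ u huv huw
    grind [adj_comm]
  exact (h₁ z hzu hzv).trans (h₂ z hzv hzw)

theorem mem_twinClass_self : u ∈ twinClass G u :=
  rfl

theorem isTwin_of_mem_twinClass (ha : a ∈ twinClass G u) (hb : b ∈ twinClass G u) :
    IsTwin G a b :=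
  IsTwin.trans (IsTwin.symm ha) hb

theorem adj_iff_adj_of_notMem_twinClass (hx : x ∉ twinClass G u) (hw : w ∈ twinClass G u) :
    G.Adj x w ↔ G.Adj x u := by
  by_cases hwu : w = u
  · rw [hwu]
  have hxu : x ≠ u := fun h => hx (h ▸ mem_twinClass_self)
  have hxw : x ≠ w := fun h => hx (h ▸ hw)
  rw [adj_comm, (IsTwin.symm hw).adj_iff hxw hxu, adj_comm]

theorem adj_iff_adj_of_mem_twinClass (ha : a ∈ twinClass G u) (hb : b ∈ twinClass G u)
    (hc : c ∈ twinClass G u) (hd : d ∈ twinClass G u) (hab : a ≠ b) (hcd : c ≠ d) :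
    G.Adj a b ↔ G.Adj c d := by
  have swap : ∀ p ∈ twinClass G u, ∀ q ∈ twinClass G u, ∀ r, r ≠ p → r ≠ q →
      (G.Adj p r ↔ G.Adj q r) := fun p hp q hq r hrp hrq =>
    (isTwin_of_mem_twinClass hp hq).adj_iff hrp hrq
  by_cases hcb : c = b
  · subst hcb
    rw [swap a ha d hd c (Ne.symm hab) hcd, adj_comm]
  by_cases hca : c = a
  · subst hca
    rw [adj_comm, swap b hb d hd c hab hcd, adj_comm]
  rw [swap a ha c hc b (Ne.symm hab) (Ne.symm hcb), adj_comm,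
    swap b hb d hd c hcb hcd, adj_comm]

theorem isClique_or_isIndepSet_twinClass :
    G.IsClique (twinClass G u) ∨ G.IsIndepSet (twinClass G u) := by
  by_cases h : ∃ a ∈ twinClass G u, ∃ b ∈ twinClass G u, a ≠ b ∧ G.Adj a b
  · obtain ⟨a, ha, b, hb, hab, hadj⟩ := h
    exact Or.inl fun c hc d hd hcd => (adj_iff_adj_of_mem_twinClass ha hb hc hd hab hcd).1 hadj
  · push Not at h
    exact Or.inr fun c hc d hd hcd => h c hc d hd hcd

theorem SimpleGraph.Connected.exists_adj_dist_lt (hG : G.Connected) (h : u ≠ w) :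
    ∃ y, G.Adj u y ∧ G.dist y w < G.dist u w := by
  obtain ⟨p, hp⟩ := hG.exists_walk_length_eq_dist u w
  cases p with
  | nil => exact absurd rfl h
  | cons hadj q =>
    refine ⟨_, hadj, ?_⟩
    rw [← hp, Walk.length_cons]
    exact Nat.lt_succ_of_le (G.dist_le q)

theorem IsTwin.dist_le (hG : G.Connected) (h : IsTwin G u v) (hw : w ≠ u) :
    G.dist v w ≤ G.dist u w := by
  obtain ⟨y, huy, hyw⟩ := hG.exists_adj_dist_lt (Ne.symm hw)
  by_cases hyv : y = v
  · subst hyv; exact hyw.le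
  have hvy : G.dist v y = 1 := dist_eq_one_iff_adj.2 ((h.adj_iff huy.ne' hyv).1 huy)
  have := hG.dist_triangle (u := v) (v := y) (w := w)
  omega

theorem IsTwin.dist_eq (hG : G.Connected) (h : IsTwin G u v) (hu : w ≠ u) (hv : w ≠ v) :
    G.dist u w = G.dist v w :=
  le_antisymm (h.symm.dist_le hG hv) (h.dist_le hG hu)

theorem twinClass_ne_univ (hG : G.Connected) (htop : G ≠ ⊤) : twinClass G u ≠ Set.univ := by
  intro huniv
  apply htop
  rcases isClique_or_isIndepSet_twinClass (G := G) (u := u) with hcl | hind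
  · ext a b
    exact ⟨Adj.ne, fun hab => hcl (huniv ▸ trivial) (huniv ▸ trivial) hab⟩
  · have hbot : G = ⊥ := by
      ext a b
      exact iff_of_false (fun h => hind (huniv ▸ trivial) (huniv ▸ trivial) h.ne h) id
    subst hbot
    have := (connected_bot_iff.1 hG).1
    exact Subsingleton.elim _ _

theorem exists_adj_of_twinClass_ne_univ (hG : G.Connected) (hne : twinClass G u ≠ Set.univ) :
    ∃ x ∉ twinClass G u, G.Adj x u := by
  obtain ⟨z, hz⟩ := (Set.ne_univ_iff_exists_notMem _).1 hne
  obtain ⟨p⟩ := hG.preconnected u z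
  obtain ⟨d, -, hd₁, hd₂⟩ := p.exists_boundary_dart _ mem_twinClass_self hz
  exact ⟨d.snd, hd₂, (adj_iff_adj_of_notMem_twinClass hd₂ hd₁).1 d.adj.symm⟩

end Twins

section SetDist

variable {V : Type*} {G : SimpleGraph V} {u v t : V} {T : Set V}

theorem setDist_le (ht : t ∈ T) : setDist G u T ≤ G.dist u t :=
  Nat.sInf_le ⟨t, ht, rfl⟩

theorem exists_mem_setDist_eq (hT : T.Nonempty) : ∃ t ∈ T, setDist G u T = G.dist u t := by
  obtain ⟨t, ht, h⟩ := Nat.sInf_mem (hT.image (G.dist u))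
  exact ⟨t, ht, h.symm⟩

theorem setDist_congr (h : ∀ t ∈ T, G.dist u t = G.dist v t) :
    setDist G u T = setDist G v T := by
  rw [setDist, setDist, Set.image_congr h]

theorem setDist_eq_zero_iff (hG : G.Connected) (hT : T.Nonempty) :
    setDist G u T = 0 ↔ u ∈ T := by
  refine ⟨fun h => ?_, fun hu => Nat.eq_zero_of_le_zero ((setDist_le hu).trans_eq G.dist_self)⟩
  obtain ⟨t, ht, hut⟩ := exists_mem_setDist_eq (G := G) (u := u) hT
  rwa [hG.dist_eq_zero_iff.1 (hut.symm.trans h)]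

theorem setDist_eq_one (hG : G.Connected) (hu : u ∉ T) (ht : t ∈ T) (hadj : G.Adj u t) :
    setDist G u T = 1 := by
  have hpos : setDist G u T ≠ 0 := fun h => hu ((setDist_eq_zero_iff hG ⟨t, ht⟩).1 h)
  have := (setDist_le (G := G) (u := u) ht).trans_eq (dist_eq_one_iff_adj.2 hadj)
  omega

theorem two_le_setDist (hG : G.Connected) (hu : u ∉ T) (hT : T.Nonempty)
    (hadj : ∀ t ∈ T, ¬ G.Adj u t) : 2 ≤ setDist G u T := by
  obtain ⟨t, ht, hut⟩ := exists_mem_setDist_eq (G := G) (u := u) hT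
  rw [hut]
  exact hG.one_lt_dist_of_ne_of_not_adj (fun h => hu (h ▸ ht)) (hadj t ht)

theorem setDist_ne_of_adj (hG : G.Connected) (hu : u ∉ T) (hv : v ∉ T) (ht : t ∈ T)
    (hut : G.Adj u t) (hvT : ∀ s ∈ T, ¬ G.Adj v s) : setDist G u T ≠ setDist G v T := by
  rw [setDist_eq_one hG hu ht hut]
  exact (two_le_setDist hG hv ⟨t, ht⟩ hvT).trans_lt' one_lt_two |>.ne

end SetDist

section LocatingPartition

variable {V : Type*} {G : SimpleGraph V} {u a b : V} {S : Set V} {P : Set (Set V)}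

theorem IsLocatingPartition.eq_of_mem_of_setDist_eq (hG : G.Connected)
    (hP : IsLocatingPartition G P) (hS : S ∈ P) (ha : a ∈ S) (hb : b ∈ S)
    (h : ∀ T ∈ P, T ≠ S → setDist G a T = setDist G b T) : a = b := by
  refine hP.2 a b fun T hT => ?_
  by_cases hTS : T = S
  · subst hTS
    rw [(setDist_eq_zero_iff hG ⟨a, ha⟩).2 ha, (setDist_eq_zero_iff hG ⟨a, ha⟩).2 hb]
  · exact h T hT hTS

theorem IsLocatingPartition.eq_of_isTwin (hG : G.Connected) (hP : IsLocatingPartition G P)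
    (hS : S ∈ P) (ha : a ∈ S) (hb : b ∈ S) (h : IsTwin G a b) : a = b := by
  refine hP.eq_of_mem_of_setDist_eq hG hS ha hb fun T hT hTS => setDist_congr fun t ht => ?_
  refine h.dist_eq hG ?_ ?_ <;> rintro rfl
  exacts [hTS (Setoid.eq_of_mem_eqv_class hP.1.2 hT ht hS ha),
    hTS (Setoid.eq_of_mem_eqv_class hP.1.2 hT ht hS hb)]

theorem IsLocatingPartition.injOn_twinClass (hG : G.Connected) (hP : IsLocatingPartition G P)
    {p : V → Set V} (hpP : ∀ a, p a ∈ P) (hp : ∀ a, a ∈ p a) : Set.InjOn p (twinClass G u) :=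
  fun a ha b hb hab =>
    hP.eq_of_isTwin hG (hpP a) (hp a) (hab ▸ hp b) (isTwin_of_mem_twinClass ha hb)

theorem IsLocatingPartition.ncard_twinClass_le [Finite V] (hG : G.Connected)
    (hP : IsLocatingPartition G P) : (twinClass G u).ncard ≤ P.ncard := by
  choose p hpP hp using fun a => (hP.1.2 a).exists
  exact Set.ncard_le_ncard_of_injOn p (fun a _ => hpP a) (hP.injOn_twinClass hG hpP hp)

-- With as many parts as twins, every part holds a twin; a vertex adjacent to the clique is then
-- at distance 1 from every other part, just like the twin in its own part.
theorem IsLocatingPartition.ncard_twinClass_ne [Finite V] (hG : G.Connected)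
    (hP : IsLocatingPartition G P) (hcl : G.IsClique (twinClass G u))
    (hne : twinClass G u ≠ Set.univ) : (twinClass G u).ncard ≠ P.ncard := by
  intro hcard
  choose p hpP hp using fun a => (hP.1.2 a).exists
  have hinj := hP.injOn_twinClass hG hpP hp (u := u)
  have himage : p '' twinClass G u = P :=
    Set.eq_of_subset_of_ncard_le (Set.image_subset_iff.2 fun a _ => hpP a)
      (by rw [hinj.ncard_image, hcard])
  obtain ⟨x, hxW, hxu⟩ := exists_adj_of_twinClass_ne_univ hG hne
  obtain ⟨w₀, hw₀, hpw₀⟩ : p x ∈ p '' twinClass G u := himage ▸ hpP x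
  suffices x = w₀ from hxW (this ▸ hw₀)
  refine hP.eq_of_mem_of_setDist_eq hG (hpP x) (hp x) (hpw₀ ▸ hp w₀) fun T hT hTx => ?_
  obtain ⟨w₁, hw₁, rfl⟩ : T ∈ p '' twinClass G u := himage ▸ hT
  have hxT : x ∉ p w₁ := fun h => hTx (Setoid.eq_of_mem_eqv_class hP.1.2 hT h (hpP x) (hp x))
  have hw₀T : w₀ ∉ p w₁ := fun h =>
    hTx (Setoid.eq_of_mem_eqv_class hP.1.2 hT h (hpP x) (hpw₀ ▸ hp w₀))
  have hw₀w₁ : w₀ ≠ w₁ := fun h => hw₀T (h ▸ hp w₁)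
  rw [setDist_eq_one hG hxT (hp w₁) ((adj_iff_adj_of_notMem_twinClass hxW hw₁).2 hxu),
    setDist_eq_one hG hw₀T (hp w₁) (hcl hw₀ hw₁ hw₀w₁)]

end LocatingPartition

section FiberPartition

variable {V α : Type*} {G : SimpleGraph V}

def fiberPartition (f : V → α) : Set (Set V) :=
  Set.range fun v => f ⁻¹' {f v}

theorem isPartition_fiberPartition (f : V → α) : Setoid.IsPartition (fiberPartition f) := by
  refine ⟨fun ⟨v, hv⟩ => (hv ▸ rfl : v ∈ (∅ : Set V)), fun a => ⟨_, ⟨⟨a, rfl⟩, rfl⟩, ?_⟩⟩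
  rintro _ ⟨⟨v, rfl⟩, hav⟩
  have hav : f a = f v := hav
  simp only [hav]

theorem ncard_fiberPartition (f : V → α) : (fiberPartition f).ncard = (Set.range f).ncard := by
  rw [fiberPartition, Set.range_comp' (fun i => f ⁻¹' {i}) f, Set.InjOn.ncard_image]
  rintro _ ⟨v, rfl⟩ _ ⟨w, rfl⟩ h
  have hv : v ∈ f ⁻¹' {f w} := by
    rw [← show f ⁻¹' {f v} = f ⁻¹' {f w} from h]
    rfl
  exact hv

theorem isLocatingPartition_fiberPartition (hG : G.Connected) {f : V → α}
    (h : ∀ a b, f a = f b → a ≠ b →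
      ∃ c, setDist G a (f ⁻¹' {f c}) ≠ setDist G b (f ⁻¹' {f c})) :
    IsLocatingPartition G (fiberPartition f) := by
  refine ⟨isPartition_fiberPartition f, fun a b hab => by_contra fun hne => ?_⟩
  have ha : a ∈ f ⁻¹' {f a} := rfl
  have hfab : b ∈ f ⁻¹' {f a} := by
    rw [← setDist_eq_zero_iff hG ⟨a, ha⟩, ← hab _ ⟨a, rfl⟩, setDist_eq_zero_iff hG ⟨a, ha⟩]
    exact ha
  obtain ⟨c, hc⟩ := h a b hfab.symm hne
  exact hc (hab _ ⟨c, rfl⟩)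

end FiberPartition

section PartitionDim

variable {V : Type*} {G : SimpleGraph V}

theorem partitionDim_le {P : Set (Set V)} (h : IsLocatingPartition G P) :
    partitionDim G ≤ P.ncard :=
  Nat.sInf_le ⟨P, h, rfl⟩

theorem exists_isLocatingPartition_ncard_eq_partitionDim (hG : G.Connected) :
    ∃ P, IsLocatingPartition G P ∧ P.ncard = partitionDim G :=
  Nat.sInf_mem (s := {k | ∃ P : Set (Set V), IsLocatingPartition G P ∧ P.ncard = k})
    ⟨_, _, isLocatingPartition_fiberPartition hG (f := id) (fun _ _ h hne => absurd h hne), rfl⟩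

theorem ncard_twinClass_le_partitionDim [Finite V] (hG : G.Connected) (u : V) :
    (twinClass G u).ncard ≤ partitionDim G := by
  obtain ⟨P, hP, hPcard⟩ := exists_isLocatingPartition_ncard_eq_partitionDim hG
  exact hPcard ▸ hP.ncard_twinClass_le hG

theorem ncard_twinClass_lt_partitionDim [Finite V] (hG : G.Connected) {u : V}
    (hcl : G.IsClique (twinClass G u)) (hne : twinClass G u ≠ Set.univ) :
    (twinClass G u).ncard < partitionDim G := by
  obtain ⟨P, hP, hPcard⟩ := exists_isLocatingPartition_ncard_eq_partitionDim hG
  exact hPcard ▸ (hP.ncard_twinClass_le hG).lt_of_ne (hP.ncard_twinClass_ne hG hcl hne)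

end PartitionDim

/-- For such `f`, the parts of `fiberPartition f` are the pairs `{f x, x}` with `x ∈ D` and
singletons. -/
structure IsPairing {V : Type*} (f : V → V) (D : Set V) : Prop where
  apply_eq_self : ∀ x ∉ D, f x = x
  mapsTo : Set.MapsTo f D Dᶜ
  injOn : Set.InjOn f D

section Pairing

variable {V : Type*} {G : SimpleGraph V} {D : Set V} {f : V → V} {x y : V}

theorem IsPairing.range_eq (hf : IsPairing f D) : Set.range f = Dᶜ := by
  refine Set.eq_of_subset_of_subset ?_ fun y hy => ⟨y, hf.apply_eq_self y hy⟩
  rintro _ ⟨z, rfl⟩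
  by_cases hz : z ∈ D
  · exact hf.mapsTo hz
  · rwa [Set.mem_compl_iff, hf.apply_eq_self z hz]

theorem IsPairing.preimage_eq_pair (hf : IsPairing f D) (hx : x ∈ D) :
    f ⁻¹' {f x} = {f x, x} := by
  ext z
  simp only [Set.mem_preimage, Set.mem_singleton_iff, Set.mem_insert_iff]
  refine ⟨fun hz => ?_, ?_⟩
  · by_cases hzD : z ∈ D
    exacts [Or.inr (hf.injOn hzD hx hz), Or.inl (hf.apply_eq_self z hzD ▸ hz)]
  · rintro (rfl | rfl)
    exacts [hf.apply_eq_self _ (hf.mapsTo hx), rfl]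

theorem IsPairing.preimage_eq_singleton (hf : IsPairing f D) (hy : y ∉ D)
    (hy' : ∀ x ∈ D, f x ≠ y) : f ⁻¹' {f y} = {y} := by
  ext z
  simp only [Set.mem_preimage, Set.mem_singleton_iff, hf.apply_eq_self y hy]
  refine ⟨fun hz => ?_, fun hz => hz ▸ hf.apply_eq_self y hy⟩
  by_cases hzD : z ∈ D
  exacts [absurd hz (hy' z hzD), hf.apply_eq_self z hzD ▸ hz]

theorem IsPairing.isLocatingPartition (hf : IsPairing f D) (hG : G.Connected)
    (hsep : ∀ x ∈ D, ∃ c, setDist G x (f ⁻¹' {f c}) ≠ setDist G (f x) (f ⁻¹' {f c})) :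
    IsLocatingPartition G (fiberPartition f) := by
  refine isLocatingPartition_fiberPartition hG fun a b hab hne => ?_
  by_cases ha : a ∈ D <;> by_cases hb : b ∈ D
  · exact absurd (hf.injOn ha hb hab) hne
  · rw [← hf.apply_eq_self b hb, ← hab]
    exact hsep a ha
  · rw [← hf.apply_eq_self a ha, hab]
    exact (hsep b hb).imp fun _ => Ne.symm
  · exact absurd (by rw [← hf.apply_eq_self a ha, hab, hf.apply_eq_self b hb]) hne

theorem exists_isPairing [Finite V] {W : Set V} (hDW : Disjoint D W) (hcard : D.ncard < W.ncard) :
    ∃ f : V → V, IsPairing f D ∧ Set.MapsTo f D W ∧ ∃ w₀ ∈ W, ∀ x ∈ D, f x ≠ w₀ := by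
  obtain ⟨w₀, hw₀⟩ := Set.nonempty_of_ncard_ne_zero (s := W) (by omega)
  have : Nonempty V := ⟨w₀⟩
  have hle : D.encard ≤ (W \ {w₀}).encard := by
    rw [← (Set.toFinite D).cast_ncard_eq, ← (Set.toFinite _).cast_ncard_eq,
      Set.ncard_sdiff_singleton_of_mem hw₀]
    exact_mod_cast Nat.le_sub_one_of_lt hcard
  obtain ⟨g, hg, hinj⟩ := (Set.toFinite D).exists_injOn_of_encard_le hle
  have hfg : Set.EqOn (D.piecewise g id) g D := Set.piecewise_eqOn _ _ _
  refine ⟨D.piecewise g id, ⟨fun x hx => D.piecewise_eq_of_notMem _ _ hx, fun x hx => ?_,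
    hinj.congr hfg.symm⟩, fun x hx => ?_, w₀, hw₀, fun x hx => ?_⟩
  · rw [hfg hx]
    exact hDW.notMem_of_mem_right (hg hx).1
  · rw [hfg hx]
    exact (hg hx).1
  · rw [hfg hx]
    exact (hg hx).2

end Pairing

-- Ore's argument: a minimal dominating set and its complement both dominate.
theorem SimpleGraph.exists_dominating_two_mul_ncard_le {α : Type*} [Finite α]
    (H : SimpleGraph α) {U : Set α} (hU : ∀ u ∈ U, ∃ v ∈ U, H.Adj u v) :
    ∃ Y ⊆ U, 2 * Y.ncard ≤ U.ncard ∧ ∀ u ∈ U \ Y, ∃ y ∈ Y, H.Adj u y := by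
  obtain ⟨Z, ⟨hZU, hZ⟩, hmin⟩ :=
    Set.exists_min_image {Z | Z ⊆ U ∧ ∀ u ∈ U \ Z, ∃ y ∈ Z, H.Adj u y} Set.ncard
      (Set.toFinite _) ⟨U, subset_rfl, fun u hu => absurd hu.1 hu.2⟩
  by_cases h : 2 * Z.ncard ≤ U.ncard
  · exact ⟨Z, hZU, h, hZ⟩
  refine ⟨U \ Z, Set.sdiff_subset, ?_, fun u hu => ?_⟩
  · have := Set.ncard_le_ncard hZU
    rw [Set.ncard_sdiff hZU]
    omega
  have huZ : u ∈ Z := by_contra fun huZ => hu.2 ⟨hu.1, huZ⟩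
  by_contra! hno
  have hdom : ∀ a ∈ U \ (Z \ {u}), ∃ y ∈ Z \ {u}, H.Adj a y := by
    intro a ha
    by_cases hau : a = u
    · subst hau
      obtain ⟨v, hv, hav⟩ := hU a ha.1
      have hvZ : v ∈ Z := by_contra fun hvZ => hno v ⟨hv, hvZ⟩ hav
      exact ⟨v, ⟨hvZ, hav.ne'⟩, hav⟩
    · have haZ : a ∉ Z := fun haZ => ha.2 ⟨haZ, hau⟩
      obtain ⟨y, hy, hay⟩ := hZ a ⟨ha.1, haZ⟩
      refine ⟨y, ⟨hy, ?_⟩, hay⟩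
      rintro rfl
      exact hno a ⟨ha.1, haZ⟩ hay.symm
  have hle := hmin _ ⟨Set.sdiff_subset.trans hZU, hdom⟩
  rw [Set.ncard_sdiff_singleton_of_mem huZ] at hle
  have := (Set.ncard_pos (Set.toFinite Z)).2 ⟨u, huZ⟩
  omega

section IndepSetBound

variable {V : Type*} {G : SimpleGraph V} {u x w₀ : V} {f : V → V}

theorem IsPairing.exists_separating_of_isIndepSet (hG : G.Connected)
    (hind : G.IsIndepSet (twinClass G u)) (hf : IsPairing f (twinClass G u)ᶜ)
    (hfW : Set.MapsTo f (twinClass G u)ᶜ (twinClass G u)) (hw₀ : w₀ ∈ twinClass G u)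
    (hfw₀ : ∀ x ∈ (twinClass G u)ᶜ, f x ≠ w₀) (hx : x ∉ twinClass G u) :
    ∃ c, setDist G x (f ⁻¹' {f c}) ≠ setDist G (f x) (f ⁻¹' {f c}) := by
  have hfx : f x ∈ twinClass G u := hfW hx
  by_cases hxu : G.Adj x u
  · refine ⟨w₀, ?_⟩
    rw [hf.preimage_eq_singleton (not_not_intro hw₀) hfw₀]
    refine setDist_ne_of_adj hG (fun h => hx (h ▸ hw₀)) (hfw₀ x hx) rfl
      ((adj_iff_adj_of_notMem_twinClass hx hw₀).2 hxu) ?_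
    rintro s rfl
    exact hind hfx hw₀ (hfw₀ x hx)
  obtain ⟨z, hzu, hzx, hz⟩ : ∃ z, z ≠ u ∧ z ≠ x ∧ ¬(G.Adj u z ↔ G.Adj x z) := by
    by_contra! h
    exact hx (isTwin_iff_adj_iff.2 h)
  have hzW : z ∉ twinClass G u := fun hzW =>
    hz (iff_of_false (hind mem_twinClass_self hzW hzu.symm)
      fun h => hxu ((adj_iff_adj_of_notMem_twinClass hx hzW).1 h))
  have hfz : f z ∈ twinClass G u := hfW hzW
  have hfxz : f x ≠ f z := fun h => hzx (hf.injOn hx hzW h).symm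
  have hfxz' : G.Adj (f x) z ↔ G.Adj u z := by
    rw [adj_comm, adj_iff_adj_of_notMem_twinClass hzW hfx, adj_comm]
  have hxT : x ∉ ({f z, z} : Set V) := by
    rintro (h | h)
    exacts [hx (h ▸ hfz), hzx h.symm]
  have hfxT : f x ∉ ({f z, z} : Set V) := by
    rintro (h | h)
    exacts [hfxz h, hzW (h ▸ hfx)]
  refine ⟨z, ?_⟩
  rw [hf.preimage_eq_pair hzW]
  by_cases hxz : G.Adj x z
  · refine setDist_ne_of_adj hG hxT hfxT (Or.inr rfl) hxz ?_
    rintro s (rfl | rfl)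
    · exact hind hfx hfz hfxz
    · rw [hfxz']
      tauto
  · refine (setDist_ne_of_adj hG hfxT hxT (Or.inr rfl) (hfxz'.2 (by tauto)) ?_).symm
    rintro s (rfl | rfl)
    · rwa [adj_iff_adj_of_notMem_twinClass hx hfz]
    · exact hxz

theorem partitionDim_le_of_isIndepSet [Finite V] (hG : G.Connected)
    (hind : G.IsIndepSet (twinClass G u))
    (hcard : (twinClass G u)ᶜ.ncard < (twinClass G u).ncard) :
    partitionDim G ≤ (twinClass G u).ncard := by
  obtain ⟨f, hf, hfW, w₀, hw₀, hfw₀⟩ := exists_isPairing disjoint_compl_left hcard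
  calc partitionDim G ≤ (fiberPartition f).ncard :=
        partitionDim_le <| hf.isLocatingPartition hG fun x hx =>
          hf.exists_separating_of_isIndepSet hG hind hfW hw₀ hfw₀ hx
    _ = (twinClass G u).ncard := by rw [ncard_fiberPartition, hf.range_eq, compl_compl]

end IndepSetBound

section CliqueBound

variable {V : Type*} {G : SimpleGraph V} {u x w₀ : V} {f : V → V} {Y : Set V}

-- For `x` adjacent to `u` and `y` not a twin of `u`, an edge `xy` of `levelGraph G u` means that
-- `{y}` separates `x` from the twins of `u`.
def levelGraph (G : SimpleGraph V) (u : V) : SimpleGraph V :=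
  SimpleGraph.fromRel fun a b => (G.Adj a b ↔ G.dist a u ≠ G.dist b u)

theorem exists_levelGraph_adj (hG : G.Connected) (hcl : G.IsClique (twinClass G u))
    (hx : x ∉ twinClass G u) : ∃ y ∈ (twinClass G u)ᶜ, (levelGraph G u).Adj x y := by
  by_cases hxu : G.Adj x u
  · obtain ⟨z, hzu, hzx, hz⟩ : ∃ z, z ≠ u ∧ z ≠ x ∧ ¬(G.Adj u z ↔ G.Adj x z) := by
      by_contra! h
      exact hx (isTwin_iff_adj_iff.2 h)
    have hzW : z ∉ twinClass G u := fun hzW =>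
      hz (iff_of_true (hcl mem_twinClass_self hzW hzu.symm)
        ((adj_iff_adj_of_notMem_twinClass hx hzW).2 hxu))
    refine ⟨z, hzW, (fromRel_adj _ _ _).2 ⟨hzx.symm, Or.inl ?_⟩⟩
    rw [dist_eq_one_iff_adj.2 hxu, ne_comm, Ne, dist_eq_one_iff_adj, G.adj_comm z]
    tauto
  · have hxu' : x ≠ u := by
      rintro rfl
      exact hx mem_twinClass_self
    obtain ⟨y, hxy, hyu⟩ := hG.exists_adj_dist_lt hxu'
    have hyW : y ∉ twinClass G u := fun hyW =>
      hxu ((adj_iff_adj_of_notMem_twinClass hx hyW).1 hxy)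
    exact ⟨y, hyW, (fromRel_adj _ _ _).2 ⟨hxy.ne, Or.inl (iff_of_true hxy hyu.ne')⟩⟩

theorem IsPairing.exists_separating_of_isClique (hG : G.Connected)
    (hcl : G.IsClique (twinClass G u)) (hYW : Y ⊆ (twinClass G u)ᶜ)
    (hY : ∀ x ∈ (twinClass G u)ᶜ \ Y, ∃ y ∈ Y, (levelGraph G u).Adj x y)
    (hf : IsPairing f ((twinClass G u)ᶜ \ Y))
    (hfW : Set.MapsTo f ((twinClass G u)ᶜ \ Y) (twinClass G u)) (hw₀ : w₀ ∈ twinClass G u)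
    (hfw₀ : ∀ x ∈ (twinClass G u)ᶜ \ Y, f x ≠ w₀) (hx : x ∈ (twinClass G u)ᶜ \ Y) :
    ∃ c, setDist G x (f ⁻¹' {f c}) ≠ setDist G (f x) (f ⁻¹' {f c}) := by
  have hfx : f x ∈ twinClass G u := hfW hx
  by_cases hxu : G.Adj x u
  · obtain ⟨y, hy, hxy⟩ := hY x hx
    have hyW : y ∉ twinClass G u := hYW hy
    obtain ⟨hxy, hlevel⟩ : x ≠ y ∧ (G.Adj x y ↔ ¬ G.Adj (f x) y) := by
      have h1 : G.dist x u = 1 := dist_eq_one_iff_adj.2 hxu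
      have h2 : G.Adj (f x) y ↔ G.dist y u = 1 := by
        rw [G.adj_comm, adj_iff_adj_of_notMem_twinClass hyW hfx, dist_eq_one_iff_adj]
      rw [levelGraph, fromRel_adj, G.adj_comm y, ne_comm (a := G.dist y u), or_self, h1] at hxy
      rw [h2]
      exact ⟨hxy.1, hxy.2.trans ne_comm⟩
    have hxT : x ∉ ({y} : Set V) := hxy
    have hfxT : f x ∉ ({y} : Set V) := fun h => hyW (h ▸ hfx)
    refine ⟨y, ?_⟩
    rw [hf.preimage_eq_singleton (fun h => h.2 hy) fun x' hx' h => hyW (h ▸ hfW hx')]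
    by_cases hxy' : G.Adj x y
    · exact setDist_ne_of_adj hG hxT hfxT rfl hxy' fun s hs => hs ▸ hlevel.1 hxy'
    · exact (setDist_ne_of_adj hG hfxT hxT rfl (not_not.1 (hlevel.not.1 hxy'))
        fun s hs => hs ▸ hxy').symm
  · refine ⟨w₀, ?_⟩
    rw [hf.preimage_eq_singleton (fun h => h.1 hw₀) hfw₀]
    refine (setDist_ne_of_adj (T := {w₀}) hG (hfw₀ x hx) (fun h : x = w₀ => hx.1 (h ▸ hw₀)) rfl
      (hcl hfx hw₀ (hfw₀ x hx)) ?_).symm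
    rintro s rfl h
    exact hxu ((adj_iff_adj_of_notMem_twinClass hx.1 hw₀).1 h)

theorem two_mul_partitionDim_le_of_isClique [Finite V] (hG : G.Connected)
    (hcl : G.IsClique (twinClass G u))
    (hcard : (twinClass G u)ᶜ.ncard < (twinClass G u).ncard) :
    2 * partitionDim G ≤ 2 * (twinClass G u).ncard + (twinClass G u)ᶜ.ncard := by
  obtain ⟨Y, hYW, hY2, hY⟩ := (levelGraph G u).exists_dominating_two_mul_ncard_le
    fun x hx => exists_levelGraph_adj hG hcl hx
  obtain ⟨f, hf, hfW, w₀, hw₀, hfw₀⟩ := exists_isPairing (D := (twinClass G u)ᶜ \ Y)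
    (disjoint_compl_left.mono_left Set.sdiff_subset)
    ((Set.ncard_le_ncard Set.sdiff_subset).trans_lt hcard)
  have hP := hf.isLocatingPartition hG fun x hx =>
    hf.exists_separating_of_isClique hG hcl hYW hY hfW hw₀ hfw₀ hx
  have hPcard : (fiberPartition f).ncard = Y.ncard + (twinClass G u).ncard := by
    rw [ncard_fiberPartition, hf.range_eq, Set.compl_sdiff, compl_compl,
      Set.ncard_union_eq (Set.disjoint_left.2 fun _ hy => hYW hy)]
  have := partitionDim_le hP
  omega

end CliqueBound

/-- For a connected graph `G` of order `n`, not complete, with `2·τ(G) > n` and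
`W` its twin class of maximum cardinality: `τ(G) ≤ β_p(G) ≤ (n + τ(G))/2`;
moreover `β_p(G) = τ(G)` iff `W` induces an edgeless subgraph, and
`τ(G) < β_p(G)` iff `W` induces a complete subgraph. -/
theorem twinNumber_vs_partitionDim {V : Type*} [Fintype V]
    (G : SimpleGraph V) (hG : G.Connected) (n : ℕ) (hn : Fintype.card V = n)
    (hnotcomplete : ¬ Nonempty (G ≃g (⊤ : SimpleGraph V)))
    (hτ : n < 2 * twinNumber G)
    (W : Set V) (hW : ∃ u : V, W = twinClass G u)
    (hWcard : W.ncard = twinNumber G) :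
    twinNumber G ≤ partitionDim G ∧ 2 * partitionDim G ≤ n + twinNumber G ∧
      (partitionDim G = twinNumber G ↔ ∀ u ∈ W, ∀ v ∈ W, ¬ G.Adj u v) ∧
      (twinNumber G < partitionDim G ↔ ∀ u ∈ W, ∀ v ∈ W, u ≠ v → G.Adj u v) := by
  obtain ⟨u, rfl⟩ := hW
  rw [← hWcard] at hτ ⊢
  have hne : twinClass G u ≠ Set.univ :=
    twinClass_ne_univ hG fun h => hnotcomplete ⟨h ▸ Iso.refl⟩
  have hsum : (twinClass G u).ncard + (twinClass G u)ᶜ.ncard = n := by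
    rw [Set.ncard_add_ncard_compl, Nat.card_eq_fintype_card, hn]
  have hcompl : 0 < (twinClass G u)ᶜ.ncard :=
    (Set.ncard_pos (Set.toFinite _)).2 (Set.nonempty_compl.2 hne)
  obtain ⟨a, b, ha, hb, hab⟩ := (Set.one_lt_ncard_iff (s := twinClass G u) (Set.toFinite _)).1 (by omega)
  have hlow := ncard_twinClass_le_partitionDim hG u
  rcases isClique_or_isIndepSet_twinClass (G := G) (u := u) with hcl | hind
  · have hlt := ncard_twinClass_lt_partitionDim hG hcl hne
    have hup := two_mul_partitionDim_le_of_isClique hG hcl (by omega)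
    exact ⟨hlow, by omega, iff_of_false hlt.ne' fun h => h a ha b hb (hcl ha hb hab),
      iff_of_true hlt fun _ hv _ hw hvw => hcl hv hw hvw⟩
  · have heq := le_antisymm (partitionDim_le_of_isIndepSet hG hind (by omega)) hlow
    exact ⟨hlow, by omega, iff_of_true heq fun _ hv _ hw h => hind hv hw h.ne h,
      iff_of_false heq.not_gt fun h => hind ha hb hab (h a ha b hb hab)⟩
end
end
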